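/- arXiv:1311.5027 — 6 statements merged into one kernel-verified Lean document; each statement's English description precedes it below -/
import Mathlib

section
/- For every ε > 0 there exists N such that for every n ≥ N and every finite simple graph G on n vertices, the vertex CB-partition number satisfies vp_CB(G) ≤ (1 + ε)·n/log₂ n. That is, the edge set of G can be partitioned into edge sets of complete bipartite subgraphs of G so that every vertex of G is contained in at most (1 + ε)·n/log₂ n of these subgraphs. -/
/-- A complete bipartite subgraph of a simple graph `G`, determined by two disjoint
nonempty finsets `A`, `B` of vertices such that every pair `{a, b}` with `a ∈ A`,
`b ∈ B` is an edge of `G`. -/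
structure CBSub {V : Type*} [DecidableEq V] (G : SimpleGraph V) where
  A : Finset V
  B : Finset V
  nonemptyA : A.Nonempty
  nonemptyB : B.Nonempty
  disjointAB : Disjoint A B
  adj : ∀ a ∈ A, ∀ b ∈ B, G.Adj a b

namespace CBSub

variable {V : Type*} [DecidableEq V] {G : SimpleGraph V}

/-- The vertex set of a complete bipartite subgraph. -/
def verts (H : CBSub G) : Finset V := H.A ∪ H.B

/-- The edge set of a complete bipartite subgraph: all pairs `{a, b}` with
`a ∈ A`, `b ∈ B`. -/
def edges (H : CBSub G) : Finset (Sym2 V) := (H.A ×ˢ H.B).image fun ab => s(ab.1, ab.2)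

end CBSub

/-!
Order the vertices by a level function `g` and cover every edge between two different levels
as follows: for a level `j` and a set `S` of vertices on it, take the complete bipartite graph
between `S` and all vertices on higher levels whose neighbourhood on level `j` is exactly `S`.
A vertex lies in at most `2 ^ (size of its level)` of these graphs as a member of `S`, and in
at most one per lower level as a member of the other side.

Taking as levels the blocks of `s ≈ log₂ n / (1 + ε / 2)` consecutive vertices gives load at
most `2 ^ s + n / s ≤ 2 n ^ (1 / (1 + ε / 2)) + (1 + ε / 2) n / log₂ n`. The edges inside the blocks
are covered by the same construction with single vertices as levels, at cost at most `s + 2`.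
-/

open Finset SimpleGraph Filter Asymptotics

namespace CBSub

variable {V : Type*} [DecidableEq V] {G H : SimpleGraph V}

lemma mem_edges {B : CBSub G} {e : Sym2 V} : e ∈ B.edges ↔ ∃ a ∈ B.A, ∃ b ∈ B.B, s(a, b) = e := by
  simp only [edges, mem_image, mem_product, Prod.exists]
  tauto

lemma edges_subset_edgeSet (B : CBSub G) : ↑B.edges ⊆ G.edgeSet := by
  intro e he
  obtain ⟨a, ha, b, hb, rfl⟩ := mem_edges.1 he
  exact B.adj a ha b hb

def ofLE (h : G ≤ H) (B : CBSub G) : CBSub H :=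
  { B with adj := fun a ha b hb => h (B.adj a ha b hb) }

@[simp] lemma ofLE_verts (h : G ≤ H) (B : CBSub G) : (B.ofLE h).verts = B.verts := rfl

end CBSub

section Partition

variable {V : Type*} [DecidableEq V] {G G₁ G₂ : SimpleGraph V} {ι κ : Type*}

def IsCBPartition (f : ι → CBSub G) : Prop :=
  ∀ e ∈ G.edgeSet, ∃! i, e ∈ (f i).edges

def cbLoad [Fintype ι] (f : ι → CBSub G) (v : V) : ℕ :=
  #{i | v ∈ (f i).verts}

lemma IsCBPartition.sumElim {f : ι → CBSub G₁} {g : κ → CBSub G₂} (hf : IsCBPartition f)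
    (hg : IsCBPartition g) (h₁ : G₁ ≤ G) (h₂ : G₂ ≤ G) (hd : Disjoint G₁ G₂)
    (hcov : G ≤ G₁ ⊔ G₂) :
    IsCBPartition (Sum.elim (CBSub.ofLE h₁ ∘ f) (CBSub.ofLE h₂ ∘ g)) := by
  have hd' := disjoint_edgeSet.2 hd
  intro e he
  rcases (edgeSet_sup G₁ G₂ ▸ edgeSet_mono hcov he) with he | he
  · obtain ⟨i, hi, huniq⟩ := hf e he
    refine ⟨.inl i, hi, ?_⟩
    rintro (j | k) hx
    · exact congrArg _ (huniq j hx)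
    · exact (hd'.ne_of_mem he ((g k).edges_subset_edgeSet hx) rfl).elim
  · obtain ⟨k, hk, huniq⟩ := hg e he
    refine ⟨.inr k, hk, ?_⟩
    rintro (j | k') hx
    · exact (hd'.ne_of_mem ((f j).edges_subset_edgeSet hx) he rfl).elim
    · exact congrArg _ (huniq k' hx)

lemma cbLoad_sumElim [Fintype ι] [Fintype κ] (f : ι → CBSub G₁) (g : κ → CBSub G₂)
    (h₁ : G₁ ≤ G) (h₂ : G₂ ≤ G) (v : V) :
    cbLoad (Sum.elim (CBSub.ofLE h₁ ∘ f) (CBSub.ofLE h₂ ∘ g)) v = cbLoad f v + cbLoad g v := by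
  simp only [cbLoad, card_filter, Fintype.sum_sum_type, Sum.elim_inl, Sum.elim_inr,
    Function.comp_apply, CBSub.ofLE_verts]
  congr

lemma IsCBPartition.exists_fin [Fintype ι] {f : ι → CBSub G} (hf : IsCBPartition f) :
    ∃ (M : ℕ) (f' : Fin M → CBSub G), IsCBPartition f' ∧ ∀ v, cbLoad f' v = cbLoad f v := by
  let e := Fintype.equivFin ι
  refine ⟨Fintype.card ι, f ∘ e.symm, fun x hx => ?_, fun v => ?_⟩
  · exact (e.existsUnique_congr fun i => by simp).1 (hf x hx)
  · exact card_equiv e.symm (by simp)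

end Partition

section Levels

variable {V : Type*} [Fintype V] (H : SimpleGraph V) [DecidableRel H.Adj] (g : V → ℕ)

def levelTrace (w : V) (j : ℕ) : Finset V := {a | g a = j ∧ H.Adj w a}

variable {H g} in
lemma mem_levelTrace {w a : V} {j : ℕ} : a ∈ levelTrace H g w j ↔ g a = j ∧ H.Adj w a := by
  simp [levelTrace]

variable [DecidableEq V]

def levelClass (j : ℕ) (S : Finset V) : Finset V := {w | j < g w ∧ levelTrace H g w j = S}

def levelBlocks : Finset (ℕ × Finset V) :=
  image (fun p : V × V => (g p.1, levelTrace H g p.2 (g p.1))) {p | H.Adj p.1 p.2 ∧ g p.1 < g p.2}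

variable {H g}

lemma mem_levelClass {j : ℕ} {S : Finset V} {w : V} :
    w ∈ levelClass H g j S ↔ j < g w ∧ levelTrace H g w j = S := by
  simp [levelClass]

lemma mem_levelBlocks {p : ℕ × Finset V} :
    p ∈ levelBlocks H g ↔ ∃ u w, H.Adj u w ∧ g u < g w ∧ (g u, levelTrace H g w (g u)) = p := by
  simp [levelBlocks, and_assoc]

lemma level_eq_of_mem_levelBlocks {p : ℕ × Finset V} (hp : p ∈ levelBlocks H g) {a : V}
    (ha : a ∈ p.2) : g a = p.1 := by
  obtain ⟨u, w, -, -, rfl⟩ := mem_levelBlocks.1 hp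
  exact (mem_levelTrace.1 ha).1

variable (H g)

def levelBlock (p : levelBlocks H g) : CBSub (H ⊓ (⊤ : SimpleGraph ℕ).comap g) where
  A := p.1.2
  B := levelClass H g p.1.1 p.1.2
  nonemptyA := by
    obtain ⟨u, w, huw, -, hp⟩ := mem_levelBlocks.1 p.2
    exact ⟨u, hp ▸ mem_levelTrace.2 ⟨rfl, huw.symm⟩⟩
  nonemptyB := by
    obtain ⟨u, w, -, hlt, hp⟩ := mem_levelBlocks.1 p.2
    exact ⟨w, hp ▸ mem_levelClass.2 ⟨hlt, rfl⟩⟩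
  disjointAB := by
    refine disjoint_left.2 fun a ha hb => ?_
    have := level_eq_of_mem_levelBlocks p.2 ha
    have := (mem_levelClass.1 hb).1
    omega
  adj a ha b hb := by
    obtain ⟨hlt, htr⟩ := mem_levelClass.1 hb
    have hab := mem_levelTrace.1 (htr ▸ ha)
    simp only [inf_adj, comap_adj, top_adj]
    exact ⟨hab.2.symm, by omega⟩

variable {H g}

lemma eq_of_mem_levelBlock_edges {p : levelBlocks H g} {u w : V}
    (h : s(u, w) ∈ (levelBlock H g p).edges) (hlt : g u < g w) :
    p.1 = (g u, levelTrace H g w (g u)) := by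
  obtain ⟨a, ha, b, hb, hab⟩ := CBSub.mem_edges.1 h
  have hga := level_eq_of_mem_levelBlocks p.2 ha
  obtain ⟨hlt', htr⟩ := mem_levelClass.1 hb
  rcases Sym2.eq_iff.1 hab with ⟨rfl, rfl⟩ | ⟨rfl, rfl⟩
  · exact Prod.ext hga.symm (by rw [hga, htr])
  · exact absurd hlt (by omega)

lemma isCBPartition_levelBlock : IsCBPartition (levelBlock H g) := by
  suffices key : ∀ u w, H.Adj u w → g u < g w → ∃! p, s(u, w) ∈ (levelBlock H g p).edges by
    intro e he
    induction e with
    | _ u w =>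
    simp only [mem_edgeSet, inf_adj, comap_adj, top_adj] at he
    rcases he.2.lt_or_gt with hlt | hlt
    · exact key u w he.1 hlt
    · rw [Sym2.eq_swap]
      exact key w u he.1.symm hlt
  intro u w huw hlt
  have hp : (g u, levelTrace H g w (g u)) ∈ levelBlocks H g :=
    mem_levelBlocks.2 ⟨u, w, huw, hlt, rfl⟩
  refine ⟨⟨_, hp⟩, CBSub.mem_edges.2 ⟨u, ?_, w, ?_, rfl⟩, fun q hq => ?_⟩
  · exact mem_levelTrace.2 ⟨rfl, huw.symm⟩
  · exact mem_levelClass.2 ⟨hlt, rfl⟩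
  · exact Subtype.ext (eq_of_mem_levelBlock_edges hq hlt)

lemma card_mem_levelBlock_A_le (v : V) :
    #{p : levelBlocks H g | v ∈ (levelBlock H g p).A} ≤ 2 ^ #{a | g a = g v} := by
  rw [← card_powerset]
  refine card_le_card_of_injOn (fun p => p.1.2) (fun p hp => ?_) fun p hp q hq hpq => ?_
  · have hv := level_eq_of_mem_levelBlocks p.2 (mem_filter.1 (mem_coe.1 hp)).2
    refine mem_coe.2 (mem_powerset.2 fun a ha => mem_filter.2 ⟨mem_univ a, ?_⟩)
    rw [level_eq_of_mem_levelBlocks p.2 ha, hv]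
  · have hvp := level_eq_of_mem_levelBlocks p.2 (mem_filter.1 (mem_coe.1 hp)).2
    have hvq := level_eq_of_mem_levelBlocks q.2 (mem_filter.1 (mem_coe.1 hq)).2
    exact Subtype.ext (Prod.ext (hvp.symm.trans hvq) hpq)

lemma card_mem_levelBlock_B_le (v : V) :
    #{p : levelBlocks H g | v ∈ (levelBlock H g p).B} ≤
      #{j ∈ (H.neighborFinset v).image g | j < g v} := by
  refine card_le_card_of_injOn (fun p => p.1.1) (fun p hp => ?_) fun p hp q hq hpq => ?_
  · obtain ⟨hlt, htr⟩ := mem_levelClass.1 (mem_filter.1 (mem_coe.1 hp)).2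
    obtain ⟨a, ha⟩ := (levelBlock H g p).nonemptyA
    obtain ⟨hga, hva⟩ := mem_levelTrace.1 ((htr.symm ▸ ha : a ∈ levelTrace H g v p.1.1))
    exact mem_coe.2 (mem_filter.2 ⟨mem_image.2 ⟨a, (mem_neighborFinset _ _ _).2 hva, hga⟩, hlt⟩)
  · have htp := (mem_levelClass.1 (mem_filter.1 (mem_coe.1 hp)).2).2
    have htq := (mem_levelClass.1 (mem_filter.1 (mem_coe.1 hq)).2).2
    refine Subtype.ext (Prod.ext hpq ?_)
    rw [← htp, ← htq, show p.1.1 = q.1.1 from hpq]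

lemma cbLoad_levelBlock_le (v : V) :
    cbLoad (levelBlock H g) v ≤
      2 ^ #{a | g a = g v} + #{j ∈ (H.neighborFinset v).image g | j < g v} := by
  refine (card_le_card fun p hp => ?_).trans ((card_union_le _ _).trans
    (add_le_add (card_mem_levelBlock_A_le v) (card_mem_levelBlock_B_le v)))
  simpa only [cbLoad, CBSub.verts, mem_filter, mem_univ, true_and, mem_union] using hp

end Levels

section Blocks

variable {n s : ℕ}

abbrev blockMultipartite (n s : ℕ) : SimpleGraph (Fin n) :=
  (⊤ : SimpleGraph ℕ).comap fun a : Fin n => (a : ℕ) / s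

lemma card_filter_div_eq_le (hs : 0 < s) (j : ℕ) : #{v : Fin n | (v : ℕ) / s = j} ≤ s := by
  calc #{v : Fin n | (v : ℕ) / s = j} ≤ #(Ico (j * s) (j * s + s)) := by
        refine card_le_card_of_injOn Fin.val (fun v hv => ?_) Fin.val_injective.injOn
        simp only [coe_filter, mem_univ, true_and, Set.mem_ofPred_eq, Nat.div_eq_iff hs] at hv
        simp only [coe_Ico, Set.mem_Ico]
        omega
    _ = s := by simp

lemma cbLoad_levelBlock_div_le (hs : 0 < s) (H : SimpleGraph (Fin n)) [DecidableRel H.Adj]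
    (v : Fin n) : cbLoad (levelBlock H fun a => (a : ℕ) / s) v ≤ 2 ^ s + n / s := by
  refine (cbLoad_levelBlock_le v).trans (add_le_add ?_ ?_)
  · exact Nat.pow_le_pow_right two_pos (card_filter_div_eq_le hs _)
  · calc _ ≤ #(range ((v : ℕ) / s)) := card_le_card fun j hj => by simp_all
      _ ≤ n / s := by simpa using Nat.div_le_div_right v.isLt.le

lemma cbLoad_levelBlock_val_le (hs : 0 < s) (G : SimpleGraph (Fin n))
    [DecidableRel (G \ blockMultipartite n s).Adj] (v : Fin n) :
    cbLoad (levelBlock (G \ blockMultipartite n s) Fin.val) v ≤ 2 + s := by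
  refine (cbLoad_levelBlock_le v).trans (add_le_add ?_ ?_)
  · have : #{a : Fin n | (a : ℕ) = v} = 1 := by simp [Fin.val_inj, filter_eq']
    rw [this, pow_one]
  · calc _ ≤ #(((G \ blockMultipartite n s).neighborFinset v).image Fin.val) :=
          card_filter_le _ _
      _ ≤ #((G \ blockMultipartite n s).neighborFinset v) := card_image_le
      _ ≤ #{a : Fin n | (a : ℕ) / s = v / s} := card_le_card fun a ha => by
          simp_all [sdiff_adj]
      _ ≤ s := card_filter_div_eq_le hs _

end Blocks

lemma exists_cbPartition_cbLoad_le {n s : ℕ} (hs : 0 < s) (G : SimpleGraph (Fin n)) :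
    ∃ (M : ℕ) (f : Fin M → CBSub G), IsCBPartition f ∧ ∀ v, cbLoad f v ≤ s + 2 + 2 ^ s + n / s := by
  classical
  have h₁ : (G \ blockMultipartite n s) ⊓ (⊤ : SimpleGraph ℕ).comap Fin.val ≤ G :=
    inf_le_left.trans sdiff_le
  have h₂ : G ⊓ blockMultipartite n s ≤ G := inf_le_left
  have hd : Disjoint ((G \ blockMultipartite n s) ⊓ (⊤ : SimpleGraph ℕ).comap Fin.val)
      (G ⊓ blockMultipartite n s) :=
    disjoint_inf_sdiff.symm.mono_left inf_le_left
  have hcov : G ≤ (G \ blockMultipartite n s) ⊓ (⊤ : SimpleGraph ℕ).comap Fin.val ⊔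
      G ⊓ blockMultipartite n s := by
    rw [comap_top Fin.val_injective, inf_top_eq, sup_sdiff_inf]
  obtain ⟨M, f, hf, hload⟩ :=
    (isCBPartition_levelBlock.sumElim isCBPartition_levelBlock h₁ h₂ hd hcov).exists_fin
  refine ⟨M, f, hf, fun v => ?_⟩
  rw [hload, cbLoad_sumElim]
  have := add_le_add (cbLoad_levelBlock_val_le hs G v) (cbLoad_levelBlock_div_le hs G v)
  omega

lemma isLittleO_rpow_mul_log {c : ℝ} (hc : c < 1) :
    (fun x : ℝ => x ^ c * Real.log x) =o[atTop] id := by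
  refine ((isBigO_refl (fun x : ℝ => x ^ c) atTop).mul_isLittleO
    (isLittleO_log_rpow_atTop (sub_pos.2 hc))).congr' EventuallyEq.rfl ?_
  filter_upwards [eventually_gt_atTop 0] with x hx
  rw [← Real.rpow_add hx, add_sub_cancel, Real.rpow_one, id]

lemma eventually_logb_mul_le {c δ : ℝ} (hc : c < 1) (hδ : 0 < δ) :
    ∀ᶠ x : ℝ in atTop, (Real.logb 2 x + 3 + 2 * x ^ c) * Real.logb 2 x ≤ δ * x := by
  have h : (fun x : ℝ => (Real.logb 2 x + 3 + 2 * x ^ c) * Real.logb 2 x) =o[atTop] id := by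
    have := ((Real.isLittleO_pow_log_id_atTop (n := 2)).const_mul_left ((Real.log 2)⁻¹ ^ 2)).add
      ((Real.isLittleO_log_id_atTop.const_mul_left (3 * (Real.log 2)⁻¹)).add
        ((isLittleO_rpow_mul_log hc).const_mul_left (2 * (Real.log 2)⁻¹)))
    refine this.congr_left fun x => ?_
    simp only [Real.logb]
    ring
  filter_upwards [h.bound hδ, eventually_ge_atTop 0] with x hx hx0
  rw [Real.norm_eq_abs, id, Real.norm_of_nonneg hx0] at hx
  exact (le_abs_self _).trans hx

lemma eventually_exists_blockSize {ε : ℝ} (hε : 0 < ε) :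
    ∀ᶠ n : ℕ in atTop, ∃ s : ℕ, 0 < s ∧
      ((s + 2 + 2 ^ s + n / s : ℕ) : ℝ) ≤ (1 + ε) * n / Real.logb 2 n := by
  set δ := ε / 2
  set c := (1 + δ)⁻¹
  have hδ : 0 < δ := half_pos hε
  have hc1 : c < 1 := inv_lt_one_of_one_lt₀ (by linarith)
  filter_upwards [tendsto_natCast_atTop_atTop.eventually (eventually_logb_mul_le hc1 hδ),
    eventually_ge_atTop 2]
    with n hP hn
  have hn' : (2 : ℝ) ≤ n := by exact_mod_cast hn
  set L := Real.logb 2 n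
  have hL : 1 ≤ L := by
    rw [Real.le_logb_iff_rpow_le one_lt_two (by linarith), Real.rpow_one]
    exact hn'
  have hc : 0 < c := by positivity
  refine ⟨⌈L * c⌉₊, Nat.ceil_pos.2 (by positivity), ?_⟩
  set s := ⌈L * c⌉₊
  have hs_ge : L * c ≤ s := Nat.le_ceil _
  have hs_le : (s : ℝ) ≤ L * c + 1 := (Nat.ceil_lt_add_one (by positivity)).le
  have hpow : (2 : ℝ) ^ s ≤ 2 * n ^ c := by
    calc (2 : ℝ) ^ s = 2 ^ (s : ℝ) := (Real.rpow_natCast 2 s).symm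
      _ ≤ 2 ^ (L * c + 1) := Real.rpow_le_rpow_of_exponent_le one_le_two hs_le
      _ = 2 * n ^ c := by
        rw [Real.rpow_add two_pos, Real.rpow_one, Real.rpow_mul zero_le_two,
          Real.rpow_logb two_pos (by norm_num) (by linarith), mul_comm]
  have hdiv : ((n / s : ℕ) : ℝ) ≤ (1 + δ) * n / L := by
    calc ((n / s : ℕ) : ℝ) ≤ n / s := Nat.cast_div_le
      _ ≤ n / (L * c) := div_le_div_of_nonneg_left (by positivity) (by positivity) hs_ge
      _ = (1 + δ) * n / L := by
        simp only [c]
        field_simp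
  have hsmall : (s : ℝ) + 2 + 2 ^ s ≤ δ * n / L := by
    rw [le_div_iff₀ (by positivity)]
    calc ((s : ℝ) + 2 + 2 ^ s) * L ≤ (L + 3 + 2 * n ^ c) * L := by
          have hLc : L * c ≤ L := mul_le_of_le_one_right (by positivity) hc1.le
          exact mul_le_mul_of_nonneg_right (by linarith) (by positivity)
      _ ≤ δ * n := hP
  push_cast
  calc (s : ℝ) + 2 + 2 ^ s + ((n / s : ℕ) : ℝ) ≤ δ * n / L + (1 + δ) * n / L := by linarith
    _ = (1 + ε) * n / L := by
      simp only [δ]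
      ring

/-- **Erdős–Pyber theorem, integer version.**  For every `ε > 0` there is `N` such
that for every `n ≥ N` and every simple graph `G` on `n` vertices, the edge set of
`G` can be partitioned into the edge sets of complete bipartite subgraphs of `G`
in such a way that every vertex is contained in at most `(1 + ε) · n / log₂ n` of
these subgraphs; i.e. `vp_CB(G) ≤ (1 + ε) · n / log₂ n`. -/
theorem erdos_pyber_integer :
    ∀ ε : ℝ, 0 < ε → ∃ N : ℕ, ∀ n : ℕ, N ≤ n → ∀ G : SimpleGraph (Fin n),
      ∃ (M : ℕ) (f : Fin M → CBSub G),
        (∀ e ∈ G.edgeSet, ∃! i : Fin M, e ∈ (f i).edges) ∧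
        ∀ v : Fin n,
          (((Finset.univ.filter fun i : Fin M => v ∈ (f i).verts).card : ℝ) ≤
            (1 + ε) * n / Real.logb 2 n) := by
  intro ε hε
  obtain ⟨N, hN⟩ := eventually_atTop.1 (eventually_exists_blockSize hε)
  refine ⟨N, fun n hn G => ?_⟩
  obtain ⟨s, hs, hbound⟩ := hN n hn
  obtain ⟨M, f, hf, hload⟩ := exists_cbPartition_cbLoad_le hs G
  exact ⟨M, f, hf, fun v => (Nat.cast_le.2 (hload v)).trans hbound⟩
end

section
/- Fix an integer d ≥ 2. For every ε > 0 there exists N such that for every n ≥ N and every d-uniform hypergraph H on n vertices, the vertex CB-partition number satisfies vp_CB(H) ≤ (1/(d−2)! + ε)·n^(d−1)/log₂ n. That is, the edge set of H can be partitioned into edge sets of d-cuph subhypergraphs of H so that every vertex is contained in at most (1/(d−2)! + ε)·n^(d−1)/log₂ n of these subhypergraphs. -/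
/-- A `d`-cuph (complete `d`-uniform `d`-partite hypergraph) subhypergraph of the
`d`-uniform hypergraph with vertex type `V` and edge set `E`: its vertex set is
partitioned into `d` nonempty pairwise disjoint parts, its edges are exactly the
`d`-element sets meeting every part in a single vertex, and all of its edges
belong to `E`. -/
structure DCuphSub (V : Type*) [Fintype V] [DecidableEq V] (d : ℕ)
    (E : Finset (Finset V)) where
  parts : Fin d → Finset V
  nonempty : ∀ i, (parts i).Nonempty
  disjoint : ∀ i j, i ≠ j → Disjoint (parts i) (parts j)
  sub : ∀ e : Finset V,
    (e ⊆ Finset.univ.biUnion parts ∧ ∀ i, (e ∩ parts i).card = 1) → e ∈ E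

namespace DCuphSub

variable {V : Type*} [Fintype V] [DecidableEq V] {d : ℕ} {E : Finset (Finset V)}

/-- The vertex set of a `d`-cuph subhypergraph. -/
def verts (C : DCuphSub V d E) : Finset V := Finset.univ.biUnion C.parts

/-- The edge set of a `d`-cuph subhypergraph: all sets meeting every part in
exactly one vertex. -/
def edges (C : DCuphSub V d E) : Finset (Finset V) :=
  Finset.univ.filter fun e => e ⊆ C.verts ∧ ∀ i, (e ∩ C.parts i).card = 1

end DCuphSub

/-!
Order the vertices and cut them into blocks of `s ≈ log₂ n - 2 log₂ log₂ n` consecutive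
vertices. Write an edge as `S ∪ {u, y}` with `S < u < y`. For fixed `S`, block `b` and `y`,
let `N` be the set of those `u` in block `b` for which `S ∪ {u, y}` is such an edge, and let
`Y` collect all `y` giving the same `N`: the singletons of `S`, `N` and `Y` are the parts of a
`d`-cuph, and these cuphs partition the edges. A vertex `v` lies in `Y` for at most
`C(n, d-2) (n/s + 1)` of them, since `S`, `b` and `v` determine `N`; it lies in `S` or `N` for
only `O(n^(d-2) 2^s) = o(n^(d-1) / log₂ n)` of them, by the choice of `s`.
-/

open Finset Filter Topology Function

namespace DCuphSub

section Star

variable {V : Type*} (S N Y : Finset V)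

def starParts : Option (Option S) → Finset V
  | none => N
  | some none => Y
  | some (some x) => {x.1}

variable {S N Y}

theorem forall_starParts {P : Finset V → Prop} :
    (∀ o, P (starParts S N Y o)) ↔ P N ∧ P Y ∧ ∀ x ∈ S, P {x} := by
  simp [Option.forall, starParts]

theorem pairwise_disjoint_starParts (hNY : Disjoint N Y) (hSN : Disjoint S N)
    (hSY : Disjoint S Y) : Pairwise (Disjoint on (starParts S N Y)) := by
  rintro (_ | _ | ⟨x, hx⟩) (_ | _ | ⟨x', hx'⟩) h <;>
    simp_all [onFun, starParts, disjoint_singleton_left,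
      disjoint_comm, disjoint_left]

variable [DecidableEq V]

theorem card_inter_starParts_eq_one_iff (hNY : Disjoint N Y) (hSN : Disjoint S N)
    (hSY : Disjoint S Y) {e : Finset V} (he : e ⊆ N ∪ Y ∪ S) :
    (∀ o, #(e ∩ starParts S N Y o) = 1) ↔ ∃ u ∈ N, ∃ y ∈ Y, e = insert u (insert y S) := by
  rw [forall_starParts (P := fun p => #(e ∩ p) = 1)]
  constructor
  · rintro ⟨hN, hY, hS⟩
    obtain ⟨u, hu⟩ := card_eq_one.1 hN
    obtain ⟨y, hy⟩ := card_eq_one.1 hY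
    have huN : u ∈ e ∩ N := hu ▸ mem_singleton_self u
    have hyY : y ∈ e ∩ Y := hy ▸ mem_singleton_self y
    refine ⟨u, (mem_inter.1 huN).2, y, (mem_inter.1 hyY).2, ?_⟩
    ext w
    constructor
    · intro hw
      rcases mem_union.1 (he hw) with hw' | hwS
      · rcases mem_union.1 hw' with hwN | hwY
        · simp [← mem_singleton.1 (hu ▸ mem_inter.2 ⟨hw, hwN⟩)]
        · simp [← mem_singleton.1 (hy ▸ mem_inter.2 ⟨hw, hwY⟩)]
      · simp [hwS]
    · simp only [mem_insert]
      rintro (rfl | rfl | hwS)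
      · exact (mem_inter.1 huN).1
      · exact (mem_inter.1 hyY).1
      · by_contra hwe
        simpa [inter_singleton_of_notMem hwe] using hS w hwS
  · rintro ⟨u, hu, y, hy, rfl⟩
    refine ⟨?_, ?_, fun x hx => by simp [hx]⟩
    · rw [insert_inter_of_mem hu, insert_inter_of_notMem (disjoint_right.1 hNY hy),
        disjoint_iff_inter_eq_empty.1 hSN]
      simp
    · rw [insert_inter_of_notMem (disjoint_left.1 hNY hu), insert_inter_of_mem hy,
        disjoint_iff_inter_eq_empty.1 hSY]
      simp

theorem biUnion_starParts_comp {α : Type*} [Fintype α] (σ : α ≃ Option (Option S)) :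
    univ.biUnion (starParts S N Y ∘ σ) = N ∪ Y ∪ S := by
  ext v
  simp only [mem_biUnion, mem_univ, true_and, comp_apply]
  rw [σ.surjective.exists (p := fun o => v ∈ starParts S N Y o) |>.symm]
  simp [Option.exists, starParts]

variable [Fintype V] {d : ℕ} {E : Finset (Finset V)}

noncomputable def star (hd : #S + 2 = d) (hN : N.Nonempty) (hY : Y.Nonempty)
    (hNY : Disjoint N Y) (hSN : Disjoint S N) (hSY : Disjoint S Y)
    (hE : ∀ u ∈ N, ∀ y ∈ Y, insert u (insert y S) ∈ E) : DCuphSub V d E where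
  parts := starParts S N Y ∘ (Fintype.equivFinOfCardEq (by simpa using hd)).symm
  nonempty := (Equiv.surjective _).forall.1 <|
    forall_starParts.2 ⟨hN, hY, fun x _ => singleton_nonempty x⟩
  disjoint _ _ hij := pairwise_disjoint_starParts hNY hSN hSY ((Equiv.injective _).ne hij)
  sub e := by
    rintro ⟨he, hcard⟩
    rw [biUnion_starParts_comp] at he
    obtain ⟨u, hu, y, hy, rfl⟩ := (card_inter_starParts_eq_one_iff hNY hSN hSY he).1
      ((Equiv.surjective _).forall.2 hcard)
    exact hE u hu y hy

variable {hd : #S + 2 = d} {hN : N.Nonempty} {hY : Y.Nonempty} {hNY : Disjoint N Y}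
  {hSN : Disjoint S N} {hSY : Disjoint S Y} {hE : ∀ u ∈ N, ∀ y ∈ Y, insert u (insert y S) ∈ E}

theorem verts_star : (star hd hN hY hNY hSN hSY hE).verts = N ∪ Y ∪ S :=
  biUnion_starParts_comp _

theorem mem_edges_star {e : Finset V} :
    e ∈ (star hd hN hY hNY hSN hSY hE).edges ↔ ∃ u ∈ N, ∃ y ∈ Y, e = insert u (insert y S) := by
  simp only [edges, mem_filter, mem_univ, true_and, verts_star]
  constructor
  · rintro ⟨he, hcard⟩
    exact (card_inter_starParts_eq_one_iff hNY hSN hSY he).1 ((Equiv.surjective _).forall.2 hcard)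
  · rintro ⟨u, hu, y, hy, rfl⟩
    have he : insert u (insert y S) ⊆ N ∪ Y ∪ S :=
      insert_subset (by simp [hu]) (insert_subset (by simp [hy]) subset_union_right)
    exact ⟨he, (Equiv.surjective _).forall.1
      ((card_inter_starParts_eq_one_iff hNY hSN hSY he).2 ⟨u, hu, y, hy, rfl⟩)⟩

end Star

variable {V : Type*} [Fintype V] [DecidableEq V] {d : ℕ} {E : Finset (Finset V)}

theorem exists_fin_reindex {α : Type*} [Fintype α] (f : α → DCuphSub V d E) :
    ∃ (M : ℕ) (g : Fin M → DCuphSub V d E),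
      (∀ e, (∃! i, e ∈ (g i).edges) ↔ ∃! a, e ∈ (f a).edges) ∧
      ∀ v, #{i | v ∈ (g i).verts} = #{a | v ∈ (f a).verts} := by
  let σ := (Fintype.equivFin α).symm
  exact ⟨_, f ∘ σ, fun e => σ.existsUnique_congr fun _ => Iff.rfl,
    fun v => card_equiv σ (by simp)⟩

end DCuphSub

namespace Finset

variable {α : Type*}

theorem card_filter_mem_powersetCard_mul [DecidableEq α] {t : Finset α}
    {a : α} (ha : a ∈ t) (k : ℕ) :
    #{s ∈ t.powersetCard k | a ∈ s} * #t = k * (#t).choose k := by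
  obtain ⟨n, hn⟩ : ∃ n, #t = n + 1 := ⟨#t - 1, by have := card_pos.2 ⟨a, ha⟩; omega⟩
  cases k with
  | zero => simp
  | succ j =>
    have := card_filter_powersetCard_subset {a} t (j + 1) (singleton_subset_iff.2 ha) (by simp)
    simp only [singleton_subset_iff, card_singleton] at this
    rw [this, hn, Nat.add_sub_cancel, Nat.add_sub_cancel, mul_comm, Nat.add_one_mul_choose_eq,
      mul_comm]

variable [LinearOrder α]

theorem exists_eq_insert_of_nonempty {s : Finset α} (hs : s.Nonempty) :
    ∃ a t, (∀ x ∈ t, x < a) ∧ s = insert a t :=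
  ⟨s.max' hs, s.erase _, fun _ => s.lt_max'_of_mem_erase_max' hs,
    (insert_erase (max'_mem s hs)).symm⟩

theorem insert_inj_of_forall_lt {a a' : α} {s s' : Finset α} (ha : ∀ x ∈ s, x < a)
    (ha' : ∀ x ∈ s', x < a') (h : insert a s = insert a' s') : a = a' ∧ s = s' := by
  have h₁ : a ∈ insert a' s' := h ▸ mem_insert_self a s
  have h₂ : a' ∈ insert a s := h ▸ mem_insert_self a' s'
  obtain rfl : a = a' := by
    rcases mem_insert.1 h₁ with h₁ | h₁
    · exact h₁
    rcases mem_insert.1 h₂ with h₂ | h₂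
    · exact h₂.symm
    · exact absurd (ha' a h₁) (ha a' h₂).not_gt
  refine ⟨rfl, ?_⟩
  rw [← erase_insert fun h => (ha a h).false, h, erase_insert fun h => (ha' a h).false]

end Finset

section StarCover

variable {V ι : Type*} [LinearOrder V] [Fintype V] [DecidableEq ι]
  (blk : V → ι) (E : Finset (Finset V)) {k : ℕ}

def blockLink (S : Finset V) (b : ι) (y : V) : Finset V :=
  {u | blk u = b ∧ u < y ∧ (∀ x ∈ S, x < u) ∧ insert u (insert y S) ∈ E}

def linkFiber (S : Finset V) (b : ι) (N : Finset V) : Finset V :=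
  {y | blockLink blk E S b y = N}

variable {blk E}

@[simp]
theorem mem_blockLink {S : Finset V} {b : ι} {y u : V} :
    u ∈ blockLink blk E S b y ↔
      blk u = b ∧ u < y ∧ (∀ x ∈ S, x < u) ∧ insert u (insert y S) ∈ E := by
  simp [blockLink]

@[simp]
theorem mem_linkFiber {S N : Finset V} {b : ι} {y : V} :
    y ∈ linkFiber blk E S b N ↔ blockLink blk E S b y = N := by
  simp [linkFiber]

variable (blk E k)

@[ext]
structure StarIndex where
  core : Finset V
  block : ι
  link : Finset V
  card_core : #core = k
  link_nonempty : link.Nonempty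
  fiber_nonempty : (linkFiber blk E core block link).Nonempty

instance [Finite ι] : Finite (StarIndex blk E k) :=
  Finite.of_injective (fun x => (x.core, x.block, x.link)) fun x y h => by
    simp only [Prod.mk.injEq] at h
    exact StarIndex.ext h.1 h.2.1 h.2.2

noncomputable instance [Finite ι] : Fintype (StarIndex blk E k) := Fintype.ofFinite _

variable {blk E k}

namespace StarIndex

variable (x : StarIndex blk E k)

theorem mem_blockLink {u y : V} (hu : u ∈ x.link)
    (hy : y ∈ linkFiber blk E x.core x.block x.link) :
    blk u = x.block ∧ u < y ∧ (∀ z ∈ x.core, z < u) ∧ insert u (insert y x.core) ∈ E :=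
  _root_.mem_blockLink.1 ((mem_linkFiber.1 hy).symm ▸ hu)

theorem blk_eq_of_mem_link {u : V} (hu : u ∈ x.link) : blk u = x.block :=
  (x.mem_blockLink hu x.fiber_nonempty.choose_spec).1

theorem disjoint_link_fiber : Disjoint x.link (linkFiber blk E x.core x.block x.link) :=
  disjoint_left.2 fun _ hu hy => (x.mem_blockLink hu hy).2.1.false

theorem disjoint_core_link : Disjoint x.core x.link := by
  obtain ⟨y, hy⟩ := x.fiber_nonempty
  exact disjoint_left.2 fun _ hS hu => ((x.mem_blockLink hu hy).2.2.1 _ hS).false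

theorem disjoint_core_fiber : Disjoint x.core (linkFiber blk E x.core x.block x.link) := by
  obtain ⟨u, hu⟩ := x.link_nonempty
  exact disjoint_left.2 fun _ hS hy =>
    let h := x.mem_blockLink hu hy
    (lt_asymm (h.2.2.1 _ hS) h.2.1).elim

end StarIndex

noncomputable def starFamily (x : StarIndex blk E k) : DCuphSub V (k + 2) E :=
  DCuphSub.star (by rw [x.card_core]) x.link_nonempty x.fiber_nonempty x.disjoint_link_fiber
    x.disjoint_core_link x.disjoint_core_fiber fun _ hu _ hy => (x.mem_blockLink hu hy).2.2.2

theorem verts_starFamily (x : StarIndex blk E k) :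
    (starFamily x).verts = x.link ∪ linkFiber blk E x.core x.block x.link ∪ x.core :=
  DCuphSub.verts_star

theorem mem_edges_starFamily (x : StarIndex blk E k) {e : Finset V} :
    e ∈ (starFamily x).edges ↔
      ∃ u ∈ x.link, ∃ y ∈ linkFiber blk E x.core x.block x.link, e = insert u (insert y x.core) :=
  DCuphSub.mem_edges_star

theorem existsUnique_mem_edges_starFamily {e : Finset V} (he : e ∈ E) (hcard : #e = k + 2) :
    ∃! x : StarIndex blk E k, e ∈ (starFamily x).edges := by
  obtain ⟨y, t, hty, rfl⟩ := exists_eq_insert_of_nonempty (card_pos.1 (by omega) : e.Nonempty)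
  rw [card_insert_of_notMem fun h => (hty y h).false] at hcard
  obtain ⟨u, S, hSu, rfl⟩ := exists_eq_insert_of_nonempty (card_pos.1 (by omega) : t.Nonempty)
  rw [card_insert_of_notMem fun h => (hSu u h).false] at hcard
  rw [insert_comm] at he ⊢
  have hu : u ∈ blockLink blk E S (blk u) y :=
    mem_blockLink.2 ⟨rfl, hty u (mem_insert_self u S), hSu, he⟩
  let x : StarIndex blk E k :=
    ⟨S, blk u, blockLink blk E S (blk u) y, by omega, ⟨u, hu⟩, ⟨y, mem_linkFiber.2 rfl⟩⟩
  refine ⟨x, (mem_edges_starFamily x).2 ⟨u, hu, y, mem_linkFiber.2 rfl, rfl⟩, fun x' hx' => ?_⟩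
  obtain ⟨u', hu', y', hy', he'⟩ := (mem_edges_starFamily x').1 hx'
  obtain ⟨hb, hu'y', hS', -⟩ := x'.mem_blockLink hu' hy'
  rw [insert_comm, insert_comm u'] at he'
  obtain ⟨rfl, ht⟩ := insert_inj_of_forall_lt hty
    (forall_mem_insert _ _ _ |>.2 ⟨hu'y', fun z hz => (hS' z hz).trans hu'y'⟩) he'
  obtain ⟨rfl, rfl⟩ := insert_inj_of_forall_lt hSu hS' ht
  exact StarIndex.ext rfl hb.symm (mem_linkFiber.1 hy' ▸ hb ▸ rfl)

end StarCover

section Load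

variable {V ι : Type*} [LinearOrder V] [Fintype V] [DecidableEq ι]
  {blk : V → ι} {E : Finset (Finset V)} {k m : ℕ}

theorem card_filter_core_block_eq_le (hm : ∀ b, #{u | blk u = b} ≤ m)
    (s : Finset (StarIndex blk E k)) (p : Finset V × ι) :
    #{x ∈ s | (x.core, x.block) = p} ≤ 2 ^ m := by
  calc #{x ∈ s | (x.core, x.block) = p}
      ≤ #(({u | blk u = p.2} : Finset V).powerset) := by
        refine card_le_card_of_injOn (·.link) (fun x hx => ?_) fun x hx x' hx' h => ?_
        · simp only [mem_coe, mem_filter, Prod.ext_iff] at hx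
          rw [mem_coe, mem_powerset]
          intro u hu
          simp [x.blk_eq_of_mem_link hu, hx.2.2]
        · simp only [mem_coe, mem_filter, Prod.ext_iff] at hx hx'
          exact StarIndex.ext (hx.2.1.trans hx'.2.1.symm) (hx.2.2.trans hx'.2.2.symm) h
    _ ≤ 2 ^ m := by
        rw [card_powerset]
        exact Nat.pow_le_pow_right two_pos (hm _)

variable [Fintype ι]

theorem card_mem_core_le (hm : ∀ b, #{u | blk u = b} ≤ m) (v : V) :
    #{x : StarIndex blk E k | v ∈ x.core} ≤
      2 ^ m * (#{S ∈ powersetCard k univ | v ∈ S} * Fintype.card ι) := by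
  rw [← card_univ, ← card_product]
  refine card_le_mul_card_image_of_maps_to (f := fun x => (x.core, x.block))
    (fun x hx => ?_) _ fun p _ => card_filter_core_block_eq_le hm _ p
  simp only [mem_filter, mem_univ, true_and] at hx
  simp [x.card_core, hx]

theorem card_mem_link_le (hm : ∀ b, #{u | blk u = b} ≤ m) (v : V) :
    #{x : StarIndex blk E k | v ∈ x.link} ≤ 2 ^ m * (Fintype.card V).choose k := by
  rw [← card_univ, ← card_powersetCard, ← mul_one #(powersetCard k _),
    ← card_singleton (blk v), ← card_product]
  refine card_le_mul_card_image_of_maps_to (f := fun x => (x.core, x.block))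
    (fun x hx => ?_) _ fun p _ => card_filter_core_block_eq_le hm _ p
  simp only [mem_filter, mem_univ, true_and] at hx
  simp [x.card_core, x.blk_eq_of_mem_link hx]

theorem card_mem_fiber_le (v : V) :
    #{x : StarIndex blk E k | v ∈ linkFiber blk E x.core x.block x.link} ≤
      (Fintype.card V).choose k * Fintype.card ι := by
  rw [← card_univ, ← card_powersetCard, ← card_univ (α := ι), ← card_product]
  refine card_le_card_of_injOn (fun x => (x.core, x.block)) (fun x _ => by simp [x.card_core])
    fun x hx x' hx' h => ?_
  simp only [mem_coe, mem_filter, mem_univ, true_and, mem_linkFiber] at hx hx'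
  simp only [Prod.ext_iff] at h
  exact StarIndex.ext h.1 h.2 (hx.symm.trans (h.1 ▸ h.2 ▸ hx'))

theorem card_mem_verts_starFamily_le (hm : ∀ b, #{u | blk u = b} ≤ m) (v : V) :
    #{x : StarIndex blk E k | v ∈ (starFamily x).verts} ≤
      2 ^ m * (Fintype.card V).choose k + (Fintype.card V).choose k * Fintype.card ι +
        2 ^ m * (#{S ∈ powersetCard k univ | v ∈ S} * Fintype.card ι) := by
  classical
  simp only [verts_starFamily, mem_union]
  rw [filter_or, filter_or]
  refine (card_union_le _ _).trans (add_le_add ((card_union_le _ _).trans ?_) ?_)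
  · exact add_le_add (card_mem_link_le hm v) (card_mem_fiber_le v)
  · exact card_mem_core_le hm v

end Load

def finBlock (n s : ℕ) (u : Fin n) : Fin (n / s + 1) :=
  ⟨u / s, Nat.lt_succ_of_le (Nat.div_le_div_right u.isLt.le)⟩

theorem card_finBlock_eq_le {n s : ℕ} (hs : 0 < s) (b : Fin (n / s + 1)) :
    #{u | finBlock n s u = b} ≤ s := by
  calc #{u | finBlock n s u = b} ≤ #(Ico (b * s : ℕ) (b * s + s)) := by
        refine card_le_card_of_injOn Fin.val (fun u hu => ?_) Fin.val_injective.injOn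
        simp only [mem_coe, mem_filter, mem_univ, true_and, finBlock, Fin.ext_iff] at hu
        have := (Nat.div_eq_iff hs).1 hu
        simp only [mem_coe, mem_Ico]
        omega
    _ = s := by simp

/-- For `x = log₂ n`, this block length `s` satisfies `2 ^ s ≤ n / x²` and `s ~ x`. -/
noncomputable def blockLength (x : ℝ) : ℕ := ⌊x - 2 * Real.logb 2 x⌋₊

theorem two_pow_blockLength_mul_sq_le {x : ℝ} (hx : 0 < x) (hs : 1 ≤ blockLength x) :
    (2 : ℝ) ^ blockLength x * x ^ 2 ≤ 2 ^ x := by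
  have h0 : 0 ≤ x - 2 * Real.logb 2 x := zero_le_one.trans (Nat.one_le_floor_iff _ |>.1 hs)
  have hsq : (2 : ℝ) ^ (2 * Real.logb 2 x) = x ^ 2 := by
    rw [mul_comm, Real.rpow_mul two_pos.le, Real.rpow_logb two_pos one_lt_two.ne' hx, Real.rpow_two]
  calc (2 : ℝ) ^ blockLength x * x ^ 2
      ≤ 2 ^ (x - 2 * Real.logb 2 x) * 2 ^ (2 * Real.logb 2 x) := by
        rw [hsq, ← Real.rpow_natCast]
        gcongr
        · norm_num
        · exact Nat.floor_le h0
    _ = 2 ^ x := by rw [← Real.rpow_add two_pos, sub_add_cancel]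

theorem tendsto_div_blockLength :
    Tendsto (fun x => x / blockLength x) atTop (𝓝 1) := by
  suffices Tendsto (fun x => (blockLength x : ℝ) / x) atTop (𝓝 1) by
    simpa using this.inv₀ one_ne_zero
  have hlog : Tendsto (fun x => (2 * Real.logb 2 x + 1) / x) atTop (𝓝 0) := by
    have h := ((Real.isLittleO_log_id_atTop.tendsto_div_nhds_zero).const_mul
      (2 / Real.log 2)).add tendsto_inv_atTop_zero
    rw [mul_zero, add_zero] at h
    refine h.congr' ?_
    filter_upwards [eventually_gt_atTop 0] with x hx
    simp only [id, Real.logb]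
    field_simp
  refine tendsto_of_tendsto_of_tendsto_of_le_of_le' (by simpa using hlog.const_sub 1)
    tendsto_const_nhds ?_ ?_
  · filter_upwards [eventually_gt_atTop 0] with x hx
    rw [sub_div' hx.ne', div_le_div_iff_of_pos_right hx]
    have : x - 2 * Real.logb 2 x < blockLength x + 1 := Nat.lt_floor_add_one _
    linarith
  · filter_upwards [eventually_ge_atTop 1] with x hx
    rw [div_le_one (by positivity)]
    calc (blockLength x : ℝ) ≤ ⌊x⌋₊ := by
          exact_mod_cast Nat.floor_le_floor (by linarith [Real.logb_nonneg one_lt_two hx])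
      _ ≤ x := Nat.floor_le (by positivity)

theorem eventually_blockLength (c : ℝ) {δ : ℝ} (hδ : 0 < δ) :
    ∀ᶠ x in atTop, 0 < x ∧ 1 ≤ blockLength x ∧ c / x + x / blockLength x ≤ 1 + δ := by
  have h := ((tendsto_const_nhds (x := c)).div_atTop tendsto_id).add tendsto_div_blockLength
  rw [zero_add] at h
  filter_upwards [eventually_gt_atTop 0,
    tendsto_div_blockLength.eventually (lt_mem_nhds zero_lt_one),
    h.eventually (ge_mem_nhds (by linarith : (1 : ℝ) < 1 + δ))] with x hx hpos hle
  -- `x / 0 = 0`, so a positive ratio rules out `blockLength x = 0`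
  refine ⟨hx, Nat.one_le_iff_ne_zero.2 fun h0 => by simp [h0] at hpos, hle⟩

theorem load_bound_le {n k s a : ℕ} {x ε : ℝ} (hn : 1 ≤ n) (hx : 0 < x) (hs : 1 ≤ s)
    (hsx : (2 : ℝ) ^ s * x ^ 2 ≤ n) (ha : a * n = k * n.choose k)
    (hratio : (2 * k + 2) / x + x / s ≤ 1 + ε * k.factorial) :
    ((2 ^ s * n.choose k + n.choose k * (n / s + 1) + 2 ^ s * (a * (n / s + 1)) : ℕ) : ℝ) ≤
      (1 / k.factorial + ε) * n ^ (k + 1) / x := by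
  have ha' : (a : ℝ) * n = k * n.choose k := by exact_mod_cast ha
  set c : ℝ := ↑(n.choose k)
  set P : ℝ := 2 ^ s
  set K : ℝ := ((n / s : ℕ) : ℝ) + 1
  have hn' : (1 : ℝ) ≤ n := by exact_mod_cast hn
  have hs' : (1 : ℝ) ≤ s := by exact_mod_cast hs
  have hP : 1 ≤ P := one_le_pow₀ one_le_two
  have hK : K ≤ n / s + 1 := by simpa [K] using Nat.cast_div_le (α := ℝ) (m := n) (n := s)
  have haK : (a : ℝ) * K ≤ 2 * k * c := by
    have h1 : (a : ℝ) ≤ k * c := by nlinarith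
    have h2 : (k : ℝ) * c / s ≤ k * c := div_le_self (by positivity) hs'
    calc (a : ℝ) * K ≤ a * (n / s + 1) := by gcongr
      _ = k * c / s + a := by rw [mul_add, mul_div_assoc', ha', mul_one]
      _ ≤ 2 * k * c := by linarith
  have hc : c ≤ n ^ k / k.factorial := Nat.choose_le_pow_div k n
  calc ((2 ^ s * n.choose k + n.choose k * (n / s + 1) + 2 ^ s * (a * (n / s + 1)) : ℕ) : ℝ)
      = P * c + c * K + P * (a * K) := by push_cast; ring
    _ ≤ P * c + c * (n / s + 1) + P * (2 * k * c) := by gcongr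
    _ ≤ c * ((2 * k + 2) * P + n / s) := by
        have : c ≤ c * P := le_mul_of_one_le_right (by positivity) hP
        linarith
    _ ≤ c * ((2 * k + 2) * (n / x ^ 2) + n / s) := by
        gcongr
        rw [le_div_iff₀ (by positivity)]
        exact hsx
    _ = c * (n / x) * ((2 * k + 2) / x + x / s) := by field_simp
    _ ≤ n ^ k / k.factorial * (n / x) * (1 + ε * k.factorial) := by gcongr
    _ = (1 / k.factorial + ε) * n ^ (k + 1) / x := by field_simp; ring

/-- **Erdős–Pyber theorem for `d`-uniform hypergraphs, integer version.**
Fix `d ≥ 2`.  For every `ε > 0` there is `N` such that for every `n ≥ N` and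
every `d`-uniform hypergraph `H` on `n` vertices, the edge set of `H` can be
partitioned into the edge sets of `d`-cuph subhypergraphs of `H` so that every
vertex is contained in at most `(1/(d-2)! + ε) · n^(d-1) / log₂ n` of these
subhypergraphs; i.e. `vp_CB(H) ≤ (1/(d-2)! + ε) · n^(d-1) / log₂ n`. -/
theorem erdos_pyber_hypergraph_integer (d : ℕ) (hd : 2 ≤ d) :
    ∀ ε : ℝ, 0 < ε → ∃ N : ℕ, ∀ n : ℕ, N ≤ n →
      ∀ E : Finset (Finset (Fin n)), (∀ e ∈ E, e.card = d) →
        ∃ (M : ℕ) (f : Fin M → DCuphSub (Fin n) d E),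
          (∀ e ∈ E, ∃! i : Fin M, e ∈ (f i).edges) ∧
          ∀ v : Fin n,
            ((Finset.univ.filter fun i : Fin M => v ∈ (f i).verts).card : ℝ) ≤
              (1 / (d - 2).factorial + ε) * n ^ (d - 1) / Real.logb 2 n := by
  obtain ⟨k, rfl⟩ : ∃ k, d = k + 2 := ⟨d - 2, by omega⟩
  intro ε hε
  obtain ⟨N, hN⟩ := eventually_atTop.1 <|
    (Real.tendsto_logb_atTop one_lt_two |>.comp tendsto_natCast_atTop_atTop).eventually
      (eventually_blockLength (2 * k + 2) (by positivity : 0 < ε * k.factorial))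
  refine ⟨N, fun n hn E hE => ?_⟩
  obtain ⟨hx, hs, hratio⟩ := hN n hn
  have hn1 : 1 ≤ n := Nat.one_le_iff_ne_zero.2 fun h => by simp [h] at hx
  have hsx := (two_pow_blockLength_mul_sq_le hx hs).trans_eq
    (Real.rpow_logb two_pos one_lt_two.ne' (by exact_mod_cast hn1))
  obtain ⟨M, f, hcover, hload⟩ :=
    DCuphSub.exists_fin_reindex (starFamily (blk := finBlock n (blockLength (Real.logb 2 n)))
      (E := E) (k := k))
  refine ⟨M, f, fun e he => (hcover e).2 (existsUnique_mem_edges_starFamily he (hE e he)),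
    fun v => ?_⟩
  rw [hload]
  refine (Nat.cast_le.2 (card_mem_verts_starFamily_le (card_finBlock_eq_le hs) v)).trans ?_
  simpa using load_bound_le hn1 hx hs hsx
    (by simpa using card_filter_mem_powersetCard_mul (mem_univ v) k) hratio
end

section
/- For every ε > 0 there exists M such that for every m ≥ M, every n, and every finite simple graph G on n vertices in which every vertex has degree at least n − m, the fractional vertex CB-cover number satisfies vc*_CB(G) ≤ (0.722 + ε)·m/log₂ m. -/
open Finset

theorem Finset.sum_filter_or_of_disjoint {ι M : Type*} [AddCommMonoid M] {s : Finset ι}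
    {p q : ι → Prop} [DecidablePred p] [DecidablePred q] (h : ∀ x ∈ s, p x → ¬q x)
    (f : ι → M) :
    ∑ x ∈ s with p x ∨ q x, f x = ∑ x ∈ s with p x, f x + ∑ x ∈ s with q x, f x := by
  rw [sum_filter, sum_filter, sum_filter, ← sum_add_distrib]
  refine sum_congr rfl fun x hx => ?_
  by_cases hp : p x <;> simp [hp, h x hx]

theorem Fintype.sum_filter_prod_mul {α β R : Type*} [Fintype α] [Fintype β] [CommSemiring R]
    {E : α × β → Prop} {P : α → Prop} {Q : β → Prop} [DecidablePred E] [DecidablePred P]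
    [DecidablePred Q] (hE : ∀ x, E x ↔ P x.1 ∧ Q x.2) (f : α → R) (g : β → R) :
    ∑ x with E x, f x.1 * g x.2 = (∑ a with P a, f a) * ∑ b with Q b, g b := by
  rw [Finset.sum_mul_sum, ← sum_product', ← filter_product, univ_product_univ]
  exact Finset.sum_congr (filter_congr fun x _ => hE x) fun _ _ => rfl

theorem CBSub.mk_mem_edges_iff {V : Type*} [DecidableEq V] {G : SimpleGraph V} (H : CBSub G)
    {u v : V} : s(u, v) ∈ H.edges ↔ u ∈ H.A ∧ v ∈ H.B ∨ v ∈ H.A ∧ u ∈ H.B := by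
  simp only [CBSub.edges, mem_image, mem_product, Prod.exists, Sym2.eq_iff]
  constructor
  · rintro ⟨a, b, ⟨ha, hb⟩, ⟨rfl, rfl⟩ | ⟨rfl, rfl⟩⟩
    exacts [Or.inl ⟨ha, hb⟩, Or.inr ⟨ha, hb⟩]
  · rintro (⟨hu, hv⟩ | ⟨hv, hu⟩)
    exacts [⟨u, v, ⟨hu, hv⟩, Or.inl ⟨rfl, rfl⟩⟩, ⟨v, u, ⟨hv, hu⟩, Or.inr ⟨rfl, rfl⟩⟩]

def HasFractionalCBCover {V : Type*} [DecidableEq V] (G : SimpleGraph V) (L : ℝ) : Prop :=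
  ∃ (M : ℕ) (f : Fin M → CBSub G) (w : Fin M → ℝ),
    (∀ i, 0 ≤ w i) ∧
    (∀ e ∈ G.edgeSet,
      1 ≤ ∑ i ∈ Finset.univ.filter (fun i : Fin M => e ∈ (f i).edges), w i) ∧
    ∀ v : V, ∑ i ∈ Finset.univ.filter (fun i : Fin M => v ∈ (f i).verts), w i ≤ L

section Cover

variable {V : Type*} [DecidableEq V] {G : SimpleGraph V}

theorem HasFractionalCBCover.mono {L L' : ℝ} (h : HasFractionalCBCover G L) (hL : L ≤ L') :
    HasFractionalCBCover G L' :=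
  let ⟨M, f, w, hw, hcover, hload⟩ := h
  ⟨M, f, w, hw, hcover, fun v => (hload v).trans hL⟩

theorem hasFractionalCBCover_of_fintype {Ω : Type*} [Fintype Ω] (F : Ω → CBSub G)
    {μ : Ω → ℝ} (hμ : ∀ ω, 0 ≤ μ ω) {c L : ℝ} (hc : 0 < c)
    (hcover : ∀ e ∈ G.edgeSet, c ≤ ∑ ω with e ∈ (F ω).edges, μ ω)
    (hload : ∀ v, ∑ ω with v ∈ (F ω).verts, μ ω ≤ L) :
    HasFractionalCBCover G (L / c) := by
  let σ := (Fintype.equivFin Ω).symm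
  have reindex (P : Ω → Prop) [DecidablePred P] :
      ∑ i with P (σ i), μ (σ i) / c = (∑ ω with P ω, μ ω) / c := by
    rw [sum_div, sum_filter, sum_filter, ← σ.sum_comp]
  refine ⟨Fintype.card Ω, fun i => F (σ i), fun i => μ (σ i) / c,
    fun i => div_nonneg (hμ _) hc.le, fun e he => ?_, fun v => ?_⟩
  · rw [reindex (fun ω => e ∈ (F ω).edges), le_div_iff₀ hc, one_mul]
    exact hcover e he
  · rw [reindex (fun ω => v ∈ (F ω).verts)]
    exact div_le_div_of_nonneg_right (hload v) hc.le

theorem hasFractionalCBCover_of_bicliques {Ω : Type*} [Fintype Ω] {μ : Ω → ℝ}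
    (hμ : ∀ ω, 0 ≤ μ ω) (A B : Ω → Finset V) (hdisj : ∀ ω, Disjoint (A ω) (B ω))
    (hadj : ∀ ω, ∀ a ∈ A ω, ∀ b ∈ B ω, G.Adj a b) {c L : ℝ} (hc : 0 < c)
    (hcover : ∀ u v, G.Adj u v → c ≤ ∑ ω with u ∈ A ω ∧ v ∈ B ω, μ ω)
    (hload : ∀ v, ∑ ω with v ∈ A ω ∪ B ω, μ ω ≤ L) :
    HasFractionalCBCover G (L / (2 * c)) := by
  let good : Finset Ω := {ω | (A ω).Nonempty ∧ (B ω).Nonempty}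
  let F (ω : good) : CBSub G :=
    ⟨A ω, B ω, (mem_filter.mp ω.2).2.1, (mem_filter.mp ω.2).2.2, hdisj ω, hadj ω⟩
  have restrict (P : Ω → Prop) [DecidablePred P] :
      ∑ ω : good with P ω.1, μ ω = ∑ ω ∈ good with P ω, μ ω := by
    rw [sum_filter, sum_filter, sum_coe_sort good fun ω => if P ω then μ ω else 0]
  refine hasFractionalCBCover_of_fintype F (fun ω => hμ ω) (by positivity) ?_ fun v => ?_
  · intro e he
    induction e using Sym2.ind with | h u v => ?_
    rw [SimpleGraph.mem_edgeSet] at he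
    calc 2 * c ≤ ∑ ω with u ∈ A ω ∧ v ∈ B ω ∨ v ∈ A ω ∧ u ∈ B ω, μ ω := by
          rw [sum_filter_or_of_disjoint fun ω _ huv hvu =>
            disjoint_left.mp (hdisj ω) huv.1 hvu.2]
          linarith [hcover u v he, hcover v u he.symm]
      _ = ∑ ω ∈ good with u ∈ A ω ∧ v ∈ B ω ∨ v ∈ A ω ∧ u ∈ B ω, μ ω := by
          rw [filter_filter]
          refine sum_congr (filter_congr fun ω _ => ?_) fun _ _ => rfl
          refine (and_iff_right_of_imp ?_).symm
          rintro (⟨hu, hv⟩ | ⟨hv, hu⟩)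
          exacts [⟨⟨u, hu⟩, ⟨v, hv⟩⟩, ⟨⟨v, hv⟩, ⟨u, hu⟩⟩]
      _ = ∑ ω : good with s(u, v) ∈ (F ω).edges, μ ω := by
          simp only [CBSub.mk_mem_edges_iff, F]
          exact (restrict _).symm
  · calc ∑ ω : good with v ∈ (F ω).verts, μ ω
        = ∑ ω ∈ good with v ∈ A ω ∪ B ω, μ ω := restrict fun ω => v ∈ A ω ∪ B ω
      _ ≤ ∑ ω with v ∈ A ω ∪ B ω, μ ω :=
        sum_le_sum_of_subset_of_nonneg (filter_subset_filter _ (subset_univ good))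
          fun ω _ _ => hμ ω
      _ ≤ L := hload v

end Cover

section Bernoulli

variable {V : Type*} [Fintype V]

def bernoulliWeight (p : V → ℝ) (S : V → Bool) : ℝ := ∏ v, if S v then p v else 1 - p v

theorem bernoulliWeight_nonneg {p : V → ℝ} (hp₀ : ∀ v, 0 ≤ p v) (hp₁ : ∀ v, p v ≤ 1)
    (S : V → Bool) : 0 ≤ bernoulliWeight p S :=
  prod_nonneg fun v _ => by split_ifs <;> linarith [hp₀ v, hp₁ v]

theorem sum_bernoulliWeight_filter [DecidableEq V] (p : V → ℝ) {X Y : Finset V}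
    (hXY : Disjoint X Y) :
    ∑ S with (∀ x ∈ X, S x = true) ∧ ∀ y ∈ Y, S y = false, bernoulliWeight p S =
      (∏ x ∈ X, p x) * ∏ y ∈ Y, (1 - p y) := by
  set t : V → Finset Bool := fun v => if v ∈ X then {true} else if v ∈ Y then {false} else univ
  have hbox : ({S | (∀ x ∈ X, S x = true) ∧ ∀ y ∈ Y, S y = false} : Finset (V → Bool)) =
      Fintype.piFinset t := by
    ext S
    simp only [mem_filter, mem_univ, true_and, Fintype.mem_piFinset, t]
    constructor
    · rintro ⟨hX, hY⟩ v
      split_ifs with hvX hvY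
      · simp [hX v hvX]
      · simp [hY v hvY]
      · exact mem_univ _
    · intro h
      refine ⟨fun x hx => by simpa [hx] using h x, fun y hy => ?_⟩
      simpa [hy, disjoint_right.mp hXY hy] using h y
  have hcoord : ∀ v, ∑ b ∈ t v, (if b then p v else 1 - p v) =
      if v ∈ X then p v else if v ∈ Y then 1 - p v else 1 := by
    intro v
    simp only [t]
    split_ifs <;> simp
  simp only [hbox, bernoulliWeight]
  rw [← prod_univ_sum t (fun v b => if b then p v else 1 - p v)]
  simp only [hcoord]
  rw [prod_ite, prod_ite_mem, filter_mem_eq_inter, univ_inter,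
    inter_eq_right.mpr fun y hy => by simpa using disjoint_right.mp hXY hy]

end Bernoulli

noncomputable def randomBicliqueLoad (α : ℝ) (m : ℕ) : ℝ := 1 / (2 * (1 - α) ^ m) + 1 / (2 * α)

section RandomBiclique

variable {V : Type*} [Fintype V] [DecidableEq V] (G : SimpleGraph V) [DecidableRel G.Adj]

def bicliqueLeft (ω : (V → Bool) × (V → Bool)) : Finset V := {v | ω.1 v}

def bicliqueRight (ω : (V → Bool) × (V → Bool)) : Finset V :=
  {v | ω.2 v ∧ ∀ w ∈ (G.neighborFinset v)ᶜ, ω.1 w = false}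

def paddingProb (α : ℝ) (m : ℕ) (v : V) : ℝ := (1 - α) ^ (m - #(G.neighborFinset v)ᶜ)

def bicliqueWeight (α : ℝ) (m : ℕ) (ω : (V → Bool) × (V → Bool)) : ℝ :=
  bernoulliWeight (fun _ => α) ω.1 * bernoulliWeight (paddingProb G α m) ω.2

variable {G}

theorem disjoint_bicliqueLeft_bicliqueRight (ω : (V → Bool) × (V → Bool)) :
    Disjoint (bicliqueLeft ω) (bicliqueRight G ω) := by
  refine disjoint_left.mpr fun v hl hr => ?_
  simp only [bicliqueLeft, bicliqueRight, mem_filter, mem_univ, true_and] at hl hr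
  simp [hr.2 v (by simp)] at hl

theorem adj_of_mem_bicliqueLeft_of_mem_bicliqueRight {ω : (V → Bool) × (V → Bool)} {a b : V}
    (ha : a ∈ bicliqueLeft ω) (hb : b ∈ bicliqueRight G ω) : G.Adj a b := by
  simp only [bicliqueLeft, bicliqueRight, mem_filter, mem_univ, true_and] at ha hb
  by_contra h
  simp [hb.2 a (by simpa [G.adj_comm] using h)] at ha

variable {α : ℝ} {m : ℕ}

theorem sum_bicliqueWeight_filter_of_iff {X Y X' Y' : Finset V} (hXY : Disjoint X Y)
    (hXY' : Disjoint X' Y') (E : (V → Bool) × (V → Bool) → Prop) [DecidablePred E]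
    (hE : ∀ ω, E ω ↔ ((∀ x ∈ X, ω.1 x = true) ∧ ∀ y ∈ Y, ω.1 y = false) ∧
      ((∀ x ∈ X', ω.2 x = true) ∧ ∀ y ∈ Y', ω.2 y = false)) :
    ∑ ω with E ω, bicliqueWeight G α m ω =
      ((∏ _x ∈ X, α) * ∏ _y ∈ Y, (1 - α)) *
        ((∏ x ∈ X', paddingProb G α m x) * ∏ y ∈ Y', (1 - paddingProb G α m y)) := by
  unfold bicliqueWeight
  rw [Fintype.sum_filter_prod_mul (P := fun S => (∀ x ∈ X, S x = true) ∧ ∀ y ∈ Y, S y = false)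
    (Q := fun T => (∀ x ∈ X', T x = true) ∧ ∀ y ∈ Y', T y = false) hE,
    sum_bernoulliWeight_filter _ hXY,
    sum_bernoulliWeight_filter _ hXY']

theorem sum_bicliqueWeight_mem_left_mem_right {u v : V} (huv : G.Adj u v)
    (hm : #(G.neighborFinset v)ᶜ ≤ m) :
    ∑ ω with u ∈ bicliqueLeft ω ∧ v ∈ bicliqueRight G ω, bicliqueWeight G α m ω =
      α * (1 - α) ^ m := by
  rw [sum_bicliqueWeight_filter_of_iff (X := {u}) (Y := (G.neighborFinset v)ᶜ) (X' := {v})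
    (Y' := ∅) (by simpa using huv.symm) (disjoint_empty_right _) _
    fun ω => by simp [bicliqueLeft, bicliqueRight]; tauto]
  simp only [prod_singleton, prod_const, prod_empty, card_singleton, pow_one, mul_one,
    paddingProb]
  rw [mul_assoc, pow_mul_pow_sub _ hm]

theorem sum_bicliqueWeight_mem_left_union_right (v : V) (hm : #(G.neighborFinset v)ᶜ ≤ m) :
    ∑ ω with v ∈ bicliqueLeft ω ∪ bicliqueRight G ω, bicliqueWeight G α m ω =
      α + (1 - α) ^ m := by
  simp only [mem_union]
  rw [sum_filter_or_of_disjoint fun ω _ hl hr =>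
      disjoint_left.mp (disjoint_bicliqueLeft_bicliqueRight ω) hl hr,
    sum_bicliqueWeight_filter_of_iff (X := {v}) (Y := ∅) (X' := ∅) (Y' := ∅)
      (disjoint_empty_right _) (disjoint_empty_right _) _
      fun ω => by simp [bicliqueLeft],
    sum_bicliqueWeight_filter_of_iff (X := ∅) (Y := (G.neighborFinset v)ᶜ) (X' := {v})
      (Y' := ∅) (disjoint_empty_left _) (disjoint_empty_right _) _
      fun ω => by simp [bicliqueRight, and_comm]]
  simp only [prod_singleton, prod_const, prod_empty, card_singleton, card_empty, pow_zero,
    pow_one, mul_one, one_mul, paddingProb]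
  rw [pow_mul_pow_sub _ hm]

theorem bicliqueWeight_nonneg (hα₀ : 0 ≤ α) (hα₁ : α ≤ 1) (ω : (V → Bool) × (V → Bool)) :
    0 ≤ bicliqueWeight G α m ω := by
  have hq₀ : 0 ≤ 1 - α := by linarith
  have hq₁ : 1 - α ≤ 1 := by linarith
  exact mul_nonneg (bernoulliWeight_nonneg (fun _ => hα₀) (fun _ => hα₁) _)
    (bernoulliWeight_nonneg (fun _ => pow_nonneg hq₀ _) (fun _ => pow_le_one₀ hq₀ hq₁) _)

theorem hasFractionalCBCover_randomBicliqueLoad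
    (hdeg : ∀ v, Fintype.card V ≤ G.degree v + m) (hα₀ : 0 < α) (hα₁ : α < 1) :
    HasFractionalCBCover G (randomBicliqueLoad α m) := by
  have hm (v : V) : #(G.neighborFinset v)ᶜ ≤ m := by
    rw [card_compl, G.card_neighborFinset_eq_degree]
    have := hdeg v
    omega
  have hq : 0 < (1 - α) ^ m := pow_pos (by linarith) m
  have hcover := hasFractionalCBCover_of_bicliques (bicliqueWeight_nonneg hα₀.le hα₁.le)
    bicliqueLeft (bicliqueRight G) disjoint_bicliqueLeft_bicliqueRight
    (fun _ _ ha _ hb => adj_of_mem_bicliqueLeft_of_mem_bicliqueRight ha hb) (mul_pos hα₀ hq)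
    (fun u v huv => (sum_bicliqueWeight_mem_left_mem_right huv (hm v)).ge)
    (fun v => (sum_bicliqueWeight_mem_left_union_right v (hm v)).le)
  convert hcover using 1
  unfold randomBicliqueLoad
  field_simp

end RandomBiclique

section Asymptotics

open Real Filter Topology

theorem Real.exp_neg_le_one_sub {α : ℝ} (h : α ≤ 1 / 2) :
    exp (-(α + 2 * α ^ 2)) ≤ 1 - α := by
  have hq : 0 < 1 - α := by linarith
  rw [← le_log_iff_exp_le hq]
  have hinv : (1 - α)⁻¹ ≤ 1 + α + 2 * α ^ 2 := by
    rw [inv_le_iff_one_le_mul₀ hq]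
    nlinarith [mul_nonneg (sq_nonneg α) (by linarith : 0 ≤ 1 - 2 * α)]
  linarith [one_sub_inv_le_log_of_pos hq]

theorem Real.one_div_one_sub_pow_le_exp {α : ℝ} (h : α ≤ 1 / 2) (m : ℕ) :
    1 / (1 - α) ^ m ≤ exp (m * (α + 2 * α ^ 2)) := by
  have h : exp (-(m * (α + 2 * α ^ 2))) ≤ (1 - α) ^ m := by
    rw [← mul_neg, exp_nat_mul]
    exact pow_le_pow_left₀ (exp_pos _).le (exp_neg_le_one_sub h) m
  calc 1 / (1 - α) ^ m ≤ 1 / exp (-(m * (α + 2 * α ^ 2))) :=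
        one_div_le_one_div_of_le (exp_pos _) h
    _ = exp (m * (α + 2 * α ^ 2)) := by rw [exp_neg, one_div, inv_inv]

noncomputable def coverDensity (ε : ℝ) (m : ℕ) : ℝ := log m / ((1 + ε) * m)

variable {ε : ℝ} {m : ℕ}

theorem coverDensity_pos (hε : -1 < ε) (hm : 1 < m) : 0 < coverDensity ε m := by
  have : 0 < log m := log_pos (by exact_mod_cast hm)
  unfold coverDensity
  have : 0 < 1 + ε := by linarith
  positivity

theorem coverDensity_le (hε : 0 ≤ ε) : coverDensity ε m ≤ log m / m := by
  rw [coverDensity, mul_comm, ← div_div]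
  exact div_le_self (div_nonneg (log_natCast_nonneg m) m.cast_nonneg) (by linarith)

theorem one_div_one_sub_coverDensity_pow_le (hε : 0 ≤ ε) (hm : 0 < m)
    (h₁ : log m / m ≤ 1 / 2) (h₂ : 2 * log m ^ 2 / m ≤ 1) :
    1 / (1 - coverDensity ε m) ^ m ≤ exp 1 * (m : ℝ) ^ (1 / (1 + ε)) := by
  set α := coverDensity ε m
  have hx : (0 : ℝ) < m := by exact_mod_cast hm
  have hL := log_natCast_nonneg m
  have hα₀ : 0 ≤ α := by unfold α coverDensity; positivity
  have hα_le : α ≤ log m / m := coverDensity_le hε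
  have hmα : m * α = log m / (1 + ε) := by unfold α coverDensity; field_simp
  have hmα₂ : m * (2 * α ^ 2) ≤ 1 :=
    calc m * (2 * α ^ 2) = 2 * (m * α) * α := by ring
      _ ≤ 2 * log m * (log m / m) := by
          rw [hmα]; gcongr; exact div_le_self hL (by linarith)
      _ = 2 * log m ^ 2 / m := by ring
      _ ≤ 1 := h₂
  calc 1 / (1 - α) ^ m ≤ exp (m * (α + 2 * α ^ 2)) :=
        one_div_one_sub_pow_le_exp (hα_le.trans h₁) m
    _ ≤ exp (log m / (1 + ε) + 1) := by gcongr; linarith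
    _ = exp 1 * (m : ℝ) ^ (1 / (1 + ε)) := by
        rw [rpow_def_of_pos hx, exp_add, mul_comm (exp _), mul_one_div]

theorem randomBicliqueLoad_coverDensity_le (hε : 0 < ε) (hm : 1 < m)
    (h₁ : log m / m ≤ 1 / 2) (h₂ : 2 * log m ^ 2 / m ≤ 1)
    (h₃ : exp 1 * (log m / (m : ℝ) ^ (ε / (1 + ε))) ≤ 2 * ((0.722 + ε) * log 2 - (1 + ε) / 2)) :
    randomBicliqueLoad (coverDensity ε m) m ≤ (0.722 + ε) * m / logb 2 m := by
  set x : ℝ := (m : ℝ)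
  set L := log x
  have hx : 0 < x := by unfold x; positivity
  have hL : 0 < L := log_pos (by unfold x; exact_mod_cast hm)
  set α := coverDensity ε m
  have h2α : 1 / (2 * α) = (1 + ε) / 2 * (x / L) := by
    change 1 / (2 * (L / ((1 + ε) * x))) = _
    field_simp
  have hsplit : x ^ (1 / (1 + ε)) = x / L * (L / x ^ (ε / (1 + ε))) := by
    rw [show 1 / (1 + ε) = 1 - ε / (1 + ε) by field_simp; ring, rpow_sub hx, rpow_one]
    field_simp
  calc randomBicliqueLoad α m = (1 / (1 - α) ^ m) / 2 + (1 + ε) / 2 * (x / L) := by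
        rw [randomBicliqueLoad, h2α]; ring
    _ ≤ x / L * (exp 1 * (L / x ^ (ε / (1 + ε)))) / 2 + (1 + ε) / 2 * (x / L) := by
        gcongr
        calc 1 / (1 - α) ^ m ≤ exp 1 * x ^ (1 / (1 + ε)) :=
              one_div_one_sub_coverDensity_pow_le hε.le (by omega) h₁ h₂
          _ = x / L * (exp 1 * (L / x ^ (ε / (1 + ε)))) := by rw [hsplit]; ring
    _ ≤ x / L * (2 * ((0.722 + ε) * log 2 - (1 + ε) / 2)) / 2 + (1 + ε) / 2 * (x / L) := by
        gcongr
    _ = (0.722 + ε) * x / logb 2 x := by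
        change _ = (0.722 + ε) * x / (L / log 2)
        field_simp
        ring

theorem eventually_randomBicliqueLoad_coverDensity_le (hε : 0 < ε) :
    ∀ᶠ m : ℕ in atTop, 0 < coverDensity ε m ∧ coverDensity ε m < 1 ∧
      randomBicliqueLoad (coverDensity ε m) m ≤ (0.722 + ε) * m / logb 2 m := by
  have hgap : 0 < (0.722 + ε) * log 2 - (1 + ε) / 2 := by nlinarith [log_two_gt_d9]
  have hδ : 0 < ε / (1 + ε) := by positivity
  have lim₁ : Tendsto (fun x : ℝ => log x / x) atTop (𝓝 0) := by
    simpa using tendsto_pow_log_div_mul_add_atTop 1 0 1 one_ne_zero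
  have lim₂ : Tendsto (fun x : ℝ => 2 * log x ^ 2 / x) atTop (𝓝 0) := by
    simpa [mul_div_assoc] using
      (tendsto_pow_log_div_mul_add_atTop 1 0 2 one_ne_zero).const_mul 2
  have lim₃ : Tendsto (fun x : ℝ => exp 1 * (log x / x ^ (ε / (1 + ε)))) atTop (𝓝 0) := by
    simpa using ((isLittleO_log_rpow_atTop hδ).tendsto_div_nhds_zero).const_mul (exp 1)
  have hT := tendsto_natCast_atTop_atTop (R := ℝ)
  filter_upwards [eventually_gt_atTop 1,
    hT.eventually (lim₁.eventually (ge_mem_nhds (by norm_num : (0 : ℝ) < 1 / 2))),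
    hT.eventually (lim₂.eventually (ge_mem_nhds one_pos)),
    hT.eventually (lim₃.eventually (ge_mem_nhds (mul_pos two_pos hgap)))] with m hm h₁ h₂ h₃
  have hα := coverDensity_le hε.le (m := m)
  exact ⟨coverDensity_pos (by linarith) hm, by linarith,
    randomBicliqueLoad_coverDensity_le hε hm h₁ h₂ h₃⟩

end Asymptotics

/-- **Fractional covers of very dense graphs.**  For every `ε > 0` there is `M₀`
such that for every `m ≥ M₀`, every `n` and every simple graph `G` on `n`
vertices in which every vertex has degree at least `n - m` (stated as
`n ≤ deg v + m`), there is a fractional CB-cover of `G` (nonnegative weights on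
complete bipartite subgraphs such that every edge gets total weight at least `1`)
in which every vertex has load at most `(0.722 + ε) · m / log₂ m`; i.e.
`vc*_CB(G) ≤ (0.722 + ε) · m / log₂ m`. -/
theorem dense_graph_fractional_cover :
    ∀ ε : ℝ, 0 < ε → ∃ M₀ : ℕ, ∀ m : ℕ, M₀ ≤ m → ∀ n : ℕ,
      ∀ G : SimpleGraph (Fin n), ∀ _ : DecidableRel G.Adj,
        (∀ v : Fin n, n ≤ G.degree v + m) →
        ∃ (M : ℕ) (f : Fin M → CBSub G) (w : Fin M → ℝ),
          (∀ i, 0 ≤ w i) ∧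
          (∀ e ∈ G.edgeSet,
            1 ≤ ∑ i ∈ Finset.univ.filter (fun i : Fin M => e ∈ (f i).edges), w i) ∧
          ∀ v : Fin n,
            ∑ i ∈ Finset.univ.filter (fun i : Fin M => v ∈ (f i).verts), w i ≤
              (0.722 + ε) * m / Real.logb 2 m := by
  intro ε hε
  obtain ⟨M₀, hM₀⟩ := Filter.eventually_atTop.mp (eventually_randomBicliqueLoad_coverDensity_le hε)
  refine ⟨M₀, fun m hm n G _ hdeg => ?_⟩
  obtain ⟨hα₀, hα₁, hload⟩ := hM₀ m hm
  exact (hasFractionalCBCover_randomBicliqueLoad (by simpa using hdeg) hα₀ hα₁).mono hload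
end

section
/- Let d ≥ 2 be an integer and 0 < p < 1. For the random d-uniform hypergraph H^d(n,p) on n labelled vertices, in which each d-element subset of the vertices is an edge independently with probability p, the probability that every (d,k)-cuph subhypergraph of H^d(n,p) (for every k) has density at most −log₂ n / log₂ p tends to 1 as n tends to infinity. -/
/-!
Write `T = log_{1/p} n`, so that `p ^ T = 1/n`. A cuph on a vertex set `W` is determined by the
partition of `W` into its parts; if its density exceeds `T` it has more than `T |W|` edges, all of
which are present with probability at most `p ^ (T |W|) = n ^ (-|W|)`. Since a cuph on `W` has at
most `|W| ^ d` edges, density above `T` also forces `|W| ^ (d-1) > T`, so `|W| → ∞` with `n`.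
A union bound over the at most `bell v` partitions of each `v`-set bounds the failure
probability by `∑_{v ≥ V₀} C(n,v) bell v n^(-v) ≤ ∑_{v ≥ V₀} bell v / v!`, a tail of a
convergent series because `bell v ≤ 2 v! (10/11)^v`.
-/

/-- A `(d,k)`-cuph (complete `d`-uniform `k`-partite hypergraph, for some `k`)
subhypergraph of the `d`-uniform hypergraph with vertex type `V` and edge set
`E`: its vertex set is partitioned into `k` nonempty pairwise disjoint parts,
its edges are exactly the `d`-element subsets of its vertex set meeting every
part in at most one vertex (hence meeting `d` of the parts, each in a single
vertex), and all of its edges belong to `E`. -/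
structure CuphSub (V : Type*) [Fintype V] [DecidableEq V] (d : ℕ)
    (E : Finset (Finset V)) where
  k : ℕ
  parts : Fin k → Finset V
  nonempty : ∀ i, (parts i).Nonempty
  disjoint : ∀ i j, i ≠ j → Disjoint (parts i) (parts j)
  sub : ∀ e : Finset V,
    (e.card = d ∧ e ⊆ Finset.univ.biUnion parts ∧ ∀ i, (e ∩ parts i).card ≤ 1) →
      e ∈ E

namespace CuphSub

variable {V : Type*} [Fintype V] [DecidableEq V] {d : ℕ} {E : Finset (Finset V)}

/-- The vertex set of a `(d,k)`-cuph subhypergraph. -/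
def verts (C : CuphSub V d E) : Finset V := Finset.univ.biUnion C.parts

/-- The edge set of a `(d,k)`-cuph subhypergraph. -/
def edges (C : CuphSub V d E) : Finset (Finset V) :=
  Finset.univ.filter fun e =>
    e.card = d ∧ e ⊆ C.verts ∧ ∀ i, (e ∩ C.parts i).card ≤ 1

/-- The density `|E|/|V|` of a `(d,k)`-cuph subhypergraph. -/
noncomputable def density (C : CuphSub V d E) : ℝ :=
  (C.edges.card : ℝ) / (C.verts.card : ℝ)

end CuphSub
open MeasureTheory

/-- The Bernoulli measure on `Bool` with parameter `p` (truncated into `[0,1]`;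
for `0 ≤ p ≤ 1` this is the genuine Bernoulli(`p`) distribution: `true` has
probability `p` and `false` has probability `1 - p`). -/
noncomputable def bernoulliMeasure (p : ℝ) : Measure Bool :=
  (PMF.bernoulli (min (Real.toNNReal p) 1) (min_le_right _ _)).toMeasure

/-- The distribution of the random `d`-uniform hypergraph `H^d(n,p)`, recorded as
the product of Bernoulli(`p`) measures over all finsets of `Fin n`: a sample
`ω : Finset (Fin n) → Bool` yields the hypergraph whose edges are the `d`-element
sets `s` with `ω s = true`, so each `d`-set is an edge independently with
probability `p`. -/
noncomputable def randomHypergraphMeasure (n : ℕ) (p : ℝ) :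
    Measure (Finset (Fin n) → Bool) :=
  Measure.pi fun _ => bernoulliMeasure p

/-- The edge set of the random hypergraph determined by the sample `ω`:
the `d`-element sets `s` with `ω s = true`. -/
def sampleEdges {n : ℕ} (d : ℕ) (ω : Finset (Fin n) → Bool) :
    Finset (Finset (Fin n)) :=
  Finset.univ.filter fun s => s.card = d ∧ ω s = true

open Finset MeasureTheory Filter Topology Nat

theorem Nat.bell_succ_eq_sum_powerset {α : Type*} (t : Finset α) :
    (#t + 1).bell = ∑ u ∈ t.powerset, (#t - #u).bell := by
  rw [sum_powerset_apply_card (fun m => (#t - m).bell), Nat.bell_succ, ← Nat.range_succ_eq_Iic]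
  simp only [smul_eq_mul]

theorem Nat.bell_three : Nat.bell 3 = 5 := by
  rw [Nat.bell_succ, ← Nat.range_succ_eq_Iic]
  simp [sum_range_succ]

theorem Real.exp_eleven_tenths_le : Real.exp (11 / 10) ≤ 33 / 10 := by
  have h := Real.exp_bound_div_one_sub_of_interval' (x := 1 / 10) (by norm_num) (by norm_num)
  rw [show (11 / 10 : ℝ) = 1 + 1 / 10 by norm_num, Real.exp_add]
  nlinarith [Real.exp_one_lt_d9, Real.exp_pos (1 / 10)]

/-- The inductive step needs `(11/10) e^(11/10) ≤ v + 1`, which holds for `v ≥ 3`. -/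
theorem Nat.bell_mul_pow_le (v : ℕ) : (v.bell : ℝ) * (11 / 10) ^ v ≤ 2 * v ! := by
  induction v using Nat.strong_induction_on with
  | _ v ih =>
  rcases v with _ | w
  · norm_num
  by_cases hw : w < 3
  · interval_cases w <;> norm_num [Nat.bell_three, Nat.factorial]
  have hterm : ∀ i ∈ range (w + 1),
      ((w.choose i * (w - i).bell : ℕ) : ℝ) * (11 / 10) ^ (w + 1)
      ≤ 2 * w ! * (11 / 10) * ((11 / 10) ^ i / i !) := by
    intro i hi
    have hiw : i ≤ w := Nat.lt_succ_iff.1 (mem_range.1 hi)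
    have hch : (w.choose i : ℝ) * (w - i)! = w ! / i ! := by
      rw [eq_div_iff (by positivity), mul_right_comm]
      exact_mod_cast Nat.choose_mul_factorial_mul_factorial hiw
    have := ih (w - i) (by omega)
    calc ((w.choose i * (w - i).bell : ℕ) : ℝ) * (11 / 10) ^ (w + 1)
        = w.choose i * ((w - i).bell * (11 / 10) ^ (w - i)) * (11 / 10) ^ (i + 1) := by
          rw [show w + 1 = (w - i) + (i + 1) by omega, pow_add]; push_cast; ring
      _ ≤ w.choose i * (2 * (w - i)!) * (11 / 10) ^ (i + 1) := by gcongr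
      _ = 2 * (w.choose i * (w - i)!) * (11 / 10) ^ (i + 1) := by ring
      _ = 2 * w ! * (11 / 10) * ((11 / 10) ^ i / i !) := by rw [hch, pow_succ]; ring
  calc ((w + 1).bell : ℝ) * (11 / 10) ^ (w + 1)
      = ∑ i ∈ range (w + 1),
          ((w.choose i * (w - i).bell : ℕ) : ℝ) * (11 / 10) ^ (w + 1) := by
        rw [Nat.bell_succ, ← Nat.range_succ_eq_Iic, Nat.cast_sum, sum_mul]
    _ ≤ 2 * w ! * (11 / 10) * ∑ i ∈ range (w + 1), (11 / 10 : ℝ) ^ i / i ! := by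
        rw [mul_sum]; exact sum_le_sum hterm
    _ ≤ 2 * w ! * (11 / 10) * (33 / 10) := by
        gcongr
        exact (Real.sum_le_exp_of_nonneg (by norm_num) _).trans Real.exp_eleven_tenths_le
    _ ≤ 2 * (w + 1)! := by
        rw [Nat.factorial_succ]
        push_cast
        have : (3 : ℝ) ≤ w := by exact_mod_cast not_lt.1 hw
        nlinarith [(by positivity : (0 : ℝ) < w !)]

theorem Nat.summable_bell_div_factorial : Summable fun v : ℕ => (v.bell : ℝ) / v ! := by
  refine Summable.of_nonneg_of_le (fun _ => by positivity) (fun v => ?_)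
    ((summable_geometric_of_lt_one (by norm_num) (by norm_num : (10 / 11 : ℝ) < 1)).mul_left 2)
  rw [div_le_iff₀ (by positivity)]
  have := Nat.bell_mul_pow_le v
  calc (v.bell : ℝ) = v.bell * (11 / 10) ^ v * (10 / 11) ^ v := by
        rw [mul_assoc, ← mul_pow]; norm_num
    _ ≤ 2 * v ! * (10 / 11) ^ v := by gcongr
    _ = _ := by ring

theorem Nat.choose_mul_inv_pow_le (n m : ℕ) :
    (n.choose m : ℝ) * (n : ℝ)⁻¹ ^ m ≤ (m ! : ℝ)⁻¹ := by
  calc (n.choose m : ℝ) * (n : ℝ)⁻¹ ^ m ≤ (n : ℝ) ^ m / m ! * (n : ℝ)⁻¹ ^ m := by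
        gcongr; exact Nat.choose_le_pow_div m n
    _ = (n * (n : ℝ)⁻¹) ^ m * (m ! : ℝ)⁻¹ := by ring
    _ ≤ (m ! : ℝ)⁻¹ :=
        mul_le_of_le_one_left (by positivity) (pow_le_one₀ (by positivity) mul_inv_le_one)

theorem sum_range_ite_le_tsum_nat_add {a : ℕ → ℝ} (ha : Summable a) (h0 : ∀ m, 0 ≤ a m)
    (N V₀ : ℕ) :
    ∑ m ∈ range N, (if V₀ ≤ m then a m else 0) ≤ ∑' k, a (k + V₀) := by
  rw [← sum_filter, show (range N).filter (V₀ ≤ ·) = Ico V₀ N by ext; simp; omega,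
    sum_Ico_eq_sum_range]
  simp_rw [add_comm V₀]
  exact (ha.comp_injective (add_left_injective V₀)).sum_le_tsum _ fun k _ => h0 _

namespace Finpartition

variable {α : Type*} [DecidableEq α] {s : Finset α}

theorem sup_erase_parts (P : Finpartition s) {q : Finset α} (hq : q ∈ P.parts) :
    (P.parts.erase q).sup id = s \ q := by
  have hs := P.sup_parts
  rw [← insert_erase hq, sup_insert, id] at hs
  have h := union_sdiff_cancel_left
    (P.supIndep (erase_subset q P.parts) hq (notMem_erase q P.parts))
  rw [← sup_eq_union, id, hs] at h
  exact h.symm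

instance instSubsingletonEmpty : Subsingleton (Finpartition (∅ : Finset α)) :=
  ⟨fun P Q => by
    ext
    simp [(parts_eq_empty_iff (P := P)).2 rfl, (parts_eq_empty_iff (P := Q)).2 rfl]⟩

theorem surjective_extend {x : α} (hx : x ∈ s) :
    Function.Surjective fun P : Σ u : (s.erase x).powerset, Finpartition (s \ insert x u) =>
      P.2.extend (insert_ne_empty x P.1.1) sdiff_disjoint (sdiff_union_of_subset
        (insert_subset hx ((mem_powerset.1 P.1.2).trans (erase_subset x s)))) := by
  intro P
  have hq : P.part x ∈ P.parts := P.part_mem.2 hx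
  have hxq : insert x ((P.part x).erase x) = P.part x := insert_erase (P.mem_part_self.2 hx)
  refine ⟨⟨⟨(P.part x).erase x, mem_powerset.2 (erase_subset_erase x (P.part_subset x))⟩,
    P.ofSubset (erase_subset _ _) ((P.sup_erase_parts hq).trans (by rw [hxq]))⟩, ?_⟩
  ext1
  simp only [extend_parts, ofSubset_parts, hxq, insert_erase hq]

theorem card_le_bell (s : Finset α) : Fintype.card (Finpartition s) ≤ (#s).bell := by
  induction s using Finset.strongInduction with
  | H s ih =>
  rcases s.eq_empty_or_nonempty with rfl | ⟨x, hx⟩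
  · simpa using Fintype.card_le_one_iff_subsingleton.2 instSubsingletonEmpty
  calc Fintype.card (Finpartition s)
      ≤ Fintype.card (Σ u : (s.erase x).powerset, Finpartition (s \ insert x u)) :=
        Fintype.card_le_of_surjective _ (surjective_extend hx)
    _ ≤ ∑ u : (s.erase x).powerset, (#(s \ insert x u)).bell := by
        rw [Fintype.card_sigma]
        gcongr with u
        exact ih _ (sdiff_ssubset
          (insert_subset hx ((mem_powerset.1 u.2).trans (erase_subset x s))) (insert_nonempty x _))
    _ = (#s).bell := by
        rw [← card_erase_add_one hx, Nat.bell_succ_eq_sum_powerset,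
          ← sum_coe_sort (s.erase x).powerset]
        refine Fintype.sum_congr _ _ fun u => ?_
        have hu := mem_powerset.1 u.2
        rw [card_sdiff_of_subset (insert_subset hx (hu.trans (erase_subset x s))),
          card_insert_of_notMem (fun h => notMem_erase x s (hu h)), card_erase_of_mem hx,
          Nat.sub_sub, add_comm 1]

def cuphEdges (P : Finpartition s) (d : ℕ) : Finset (Finset α) :=
  (s.powersetCard d).filter fun e => ∀ q ∈ P.parts, #(e ∩ q) ≤ 1

theorem lt_pow_of_mul_card_lt_card_cuphEdges {P : Finpartition s} {d : ℕ} {T : ℝ} (hd : 1 ≤ d)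
    (h : T * #s < #(P.cuphEdges d)) : T < (#s : ℝ) ^ (d - 1) := by
  have hle : (#(P.cuphEdges d) : ℝ) ≤ (#s : ℝ) ^ (d - 1) * #s := by
    rw [← pow_succ, Nat.sub_add_cancel hd]
    exact_mod_cast (card_le_card (filter_subset _ _)).trans
      ((card_powersetCard d s).trans_le (Nat.choose_le_pow _ _))
  exact lt_of_mul_lt_mul_right (h.trans_le hle) (Nat.cast_nonneg _)

end Finpartition

namespace CuphSub

variable {V : Type*} [Fintype V] [DecidableEq V] {d : ℕ} {E : Finset (Finset V)}

def toFinpartition (C : CuphSub V d E) : Finpartition C.verts where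
  parts := univ.image C.parts
  supIndep := supIndep_iff_pairwiseDisjoint.2 <| by
    simp only [coe_image, coe_univ, Set.image_univ]
    rintro _ ⟨i, rfl⟩ _ ⟨j, rfl⟩ hij
    exact C.disjoint i j fun h => hij (congrArg C.parts h)
  sup_parts := by rw [sup_image, Function.id_comp, sup_eq_biUnion]; rfl
  bot_notMem := by
    simpa only [bot_eq_empty, mem_image, mem_univ, true_and, not_exists] using
      fun i => (C.nonempty i).ne_empty

theorem cuphEdges_toFinpartition (C : CuphSub V d E) :
    C.toFinpartition.cuphEdges d = C.edges := by
  ext e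
  simp [Finpartition.cuphEdges, edges, toFinpartition, mem_powersetCard, and_comm, and_assoc]

theorem edges_subset (C : CuphSub V d E) : C.edges ⊆ E := fun e he =>
  C.sub e (mem_filter.1 he).2

/-- For `T ≥ 0` the junk value `density = 0` on an empty vertex set is harmless. -/
theorem mul_card_verts_lt_card_edges (C : CuphSub V d E) {T : ℝ} (hT : 0 ≤ T)
    (h : T < C.density) : T * #C.verts < #C.edges := by
  rcases (#C.verts).eq_zero_or_pos with h0 | hpos
  · simp only [density, h0, Nat.cast_zero, div_zero] at h
    linarith
  · rwa [density, lt_div_iff₀ (by exact_mod_cast hpos)] at h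

end CuphSub

noncomputable def denseFinpartitions (α : Type*) [Fintype α] [DecidableEq α]
    (d : ℕ) (T : ℝ) : Finset (Σ W : Finset α, Finpartition W) :=
  univ.filter fun x => T * #x.1 < #(x.2.cuphEdges d)

theorem sum_bell_mul_inv_pow_card_le (α : Type*) [Fintype α] (V₀ : ℕ) :
    ∑ W ∈ univ.filter fun W : Finset α => V₀ ≤ #W,
        ((#W).bell : ℝ) * (Fintype.card α : ℝ)⁻¹ ^ #W
      ≤ ∑' k, ((k + V₀).bell : ℝ) / (k + V₀)! := by
  set n := Fintype.card α
  calc _ = ∑ m ∈ range (n + 1),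
          n.choose m • (if V₀ ≤ m then (m.bell : ℝ) * (n : ℝ)⁻¹ ^ m else 0) := by
        rw [sum_filter, ← powerset_univ,
          sum_powerset_apply_card
            (fun m => if V₀ ≤ m then (m.bell : ℝ) * (n : ℝ)⁻¹ ^ m else 0),
          Finset.card_univ]
    _ ≤ ∑ m ∈ range (n + 1), (if V₀ ≤ m then (m.bell : ℝ) / m ! else 0) := by
        gcongr with m
        split_ifs
        · rw [nsmul_eq_mul, mul_left_comm, div_eq_mul_inv]
          exact mul_le_mul_of_nonneg_left (Nat.choose_mul_inv_pow_le n m) (Nat.cast_nonneg _)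
        · simp
    _ ≤ _ := sum_range_ite_le_tsum_nat_add Nat.summable_bell_div_factorial
        (fun _ => by positivity) _ _

theorem sum_denseFinpartitions_le {α : Type*} [Fintype α] [DecidableEq α] {d V₀ : ℕ}
    {T : ℝ} (hd : 2 ≤ d) (hT : (V₀ : ℝ) ^ (d - 1) ≤ T) :
    ∑ x ∈ denseFinpartitions α d T, ((Fintype.card α : ℝ)⁻¹) ^ #x.1
      ≤ ∑' k, ((k + V₀).bell : ℝ) / (k + V₀)! := by
  set large := univ.filter fun W : Finset α => V₀ ≤ #W
  have hsub : denseFinpartitions α d T ⊆ large.sigma fun _ => univ := by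
    intro x hx
    have hlt := hT.trans_lt
      (Finpartition.lt_pow_of_mul_card_lt_card_cuphEdges (by omega) (mem_filter.1 hx).2)
    simpa [large] using (lt_of_pow_lt_pow_left₀ _ (Nat.cast_nonneg _) hlt).le
  calc _ ≤ ∑ x ∈ large.sigma fun _ => univ, ((Fintype.card α : ℝ)⁻¹) ^ #x.1 :=
        sum_le_sum_of_subset_of_nonneg hsub fun _ _ _ => by positivity
    _ = ∑ W ∈ large,
          (Fintype.card (Finpartition W) : ℝ) * (Fintype.card α : ℝ)⁻¹ ^ #W := by
        rw [sum_sigma]; simp [sum_const]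
    _ ≤ ∑ W ∈ large, ((#W).bell : ℝ) * (Fintype.card α : ℝ)⁻¹ ^ #W := by
        gcongr with W; exact_mod_cast Finpartition.card_le_bell W
    _ ≤ _ := sum_bell_mul_inv_pow_card_le α V₀

theorem Real.neg_logb_div_logb (x p : ℝ) :
    -Real.logb 2 x / Real.logb 2 p = Real.logb p⁻¹ x := by
  simp only [Real.logb, Real.log_inv]
  rw [← neg_div, div_div_div_cancel_right₀ (Real.log_pos one_lt_two).ne', div_neg, neg_div]

theorem Real.rpow_logb_inv_base {p x : ℝ} (hp0 : 0 < p) (hp1 : p ≠ 1) (hx : 0 < x) :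
    p ^ Real.logb p⁻¹ x = x⁻¹ := by
  rw [← inv_inv (p ^ _), ← Real.inv_rpow hp0.le,
    Real.rpow_logb (inv_pos.2 hp0) (inv_ne_one.2 hp1) hx]

theorem bernoulliMeasure_singleton_true {p : ℝ} (hp : p ≤ 1) :
    bernoulliMeasure p {true} = ENNReal.ofReal p := by
  rw [bernoulliMeasure, PMF.toMeasure_apply_singleton _ _ (measurableSet_singleton _)]
  change ((min p.toNNReal 1 : NNReal) : ENNReal) = _
  rw [min_eq_left (Real.toNNReal_le_one.2 hp)]
  rfl

instance (p : ℝ) : IsProbabilityMeasure (bernoulliMeasure p) := by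
  unfold bernoulliMeasure; infer_instance

instance (n : ℕ) (p : ℝ) : IsProbabilityMeasure (randomHypergraphMeasure n p) := by
  unfold randomHypergraphMeasure; infer_instance

theorem measure_pi_bernoulli_forall_true {ι : Type*} [Fintype ι] {p : ℝ} (hp : p ≤ 1)
    (M : Finset ι) :
    Measure.pi (fun _ : ι => bernoulliMeasure p) {ω | ∀ i ∈ M, ω i = true}
      = ENNReal.ofReal p ^ #M := by
  have : {ω : ι → Bool | ∀ i ∈ M, ω i = true} = (M : Set ι).pi fun _ => {true} := by
    ext ω; simp
  rw [this, Measure.pi_pi_finset, prod_const, bernoulliMeasure_singleton_true hp]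

theorem measure_exists_dense_cuph_le {n d : ℕ} {p T : ℝ} (hp0 : 0 < p) (hp1 : p ≤ 1)
    (hT : 0 ≤ T) :
    randomHypergraphMeasure n p {ω | ∃ C : CuphSub (Fin n) d (sampleEdges d ω), T < C.density}
      ≤ ENNReal.ofReal (∑ x ∈ denseFinpartitions (Fin n) d T, (p ^ T) ^ #x.1) := by
  calc _ ≤ randomHypergraphMeasure n p
        (⋃ x ∈ denseFinpartitions (Fin n) d T,
          {ω | ∀ e ∈ x.2.cuphEdges d, ω e = true}) := by
        refine measure_mono fun ω ⟨C, hC⟩ =>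
          Set.mem_iUnion₂.2 ⟨⟨C.verts, C.toFinpartition⟩, ?_, ?_⟩
        · rw [denseFinpartitions, mem_filter, C.cuphEdges_toFinpartition]
          exact ⟨mem_univ _, C.mul_card_verts_lt_card_edges hT hC⟩
        · intro e he
          rw [C.cuphEdges_toFinpartition] at he
          exact (mem_filter.1 (C.edges_subset he)).2.2
    _ ≤ ∑ x ∈ denseFinpartitions (Fin n) d T,
          randomHypergraphMeasure n p {ω | ∀ e ∈ x.2.cuphEdges d, ω e = true} :=
        measure_biUnion_finset_le _ _
    _ ≤ ∑ x ∈ denseFinpartitions (Fin n) d T, ENNReal.ofReal ((p ^ T) ^ #x.1) := by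
        gcongr with x hx
        rw [randomHypergraphMeasure, measure_pi_bernoulli_forall_true hp1,
          ← ENNReal.ofReal_pow hp0.le]
        apply ENNReal.ofReal_le_ofReal
        rw [← Real.rpow_natCast, ← Real.rpow_natCast, ← Real.rpow_mul hp0.le]
        exact Real.rpow_le_rpow_of_exponent_ge hp0 hp1 (mem_filter.1 hx).2.le
    _ = _ := (ENNReal.ofReal_sum_of_nonneg fun _ _ => by positivity).symm

theorem tendsto_measure_exists_dense_cuph {d : ℕ} (hd : 2 ≤ d) {p : ℝ} (hp0 : 0 < p)
    (hp1 : p < 1) :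
    Tendsto (fun n : ℕ => randomHypergraphMeasure n p
      {ω | ∃ C : CuphSub (Fin n) d (sampleEdges d ω), Real.logb p⁻¹ n < C.density})
      atTop (𝓝 0) := by
  have hb : 1 < p⁻¹ := (one_lt_inv₀ hp0).2 hp1
  rw [ENNReal.tendsto_nhds_zero]
  intro ε hε
  have htail : Tendsto
      (fun V₀ : ℕ => ENNReal.ofReal (∑' k, ((k + V₀).bell : ℝ) / (k + V₀)!))
      atTop (𝓝 0) := by
    simpa using ENNReal.tendsto_ofReal (tendsto_sum_nat_add fun v => (v.bell : ℝ) / v !)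
  obtain ⟨V₀, hV₀⟩ := (htail.eventually (Iic_mem_nhds hε)).exists
  have hT := (Real.tendsto_logb_atTop hb).comp tendsto_natCast_atTop_atTop
  filter_upwards [hT.eventually_ge_atTop ((V₀ : ℝ) ^ (d - 1)), eventually_ge_atTop 1]
    with n hV hn
  have hn' : (1 : ℝ) ≤ n := by exact_mod_cast hn
  refine (measure_exists_dense_cuph_le hp0 hp1.le (Real.logb_nonneg hb hn')).trans
    (le_trans ?_ hV₀)
  rw [Real.rpow_logb_inv_base hp0 hp1.ne (by linarith)]
  exact ENNReal.ofReal_le_ofReal (by simpa using sum_denseFinpartitions_le (α := Fin n) hd hV)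

/-- **Density of multipartite subhypergraphs of random hypergraphs.**  Let
`d ≥ 2` and `0 < p < 1`.  With probability tending to `1` as `n → ∞`, every
`(d,k)`-cuph subhypergraph (for every `k`) of the random `d`-uniform hypergraph
`H^d(n,p)` has density at most `−log₂ n / log₂ p`. -/
theorem random_hypergraph_cuph_density (d : ℕ) (hd : 2 ≤ d)
    (p : ℝ) (hp0 : 0 < p) (hp1 : p < 1) :
    Filter.Tendsto
      (fun n : ℕ => randomHypergraphMeasure n p
        {ω | ∀ C : CuphSub (Fin n) d (sampleEdges d ω),
          C.density ≤ -Real.logb 2 n / Real.logb 2 p})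
      Filter.atTop (nhds 1) := by
  have hcompl : ∀ n : ℕ, {ω | ∀ C : CuphSub (Fin n) d (sampleEdges d ω),
      C.density ≤ -Real.logb 2 n / Real.logb 2 p} =
      {ω | ∃ C : CuphSub (Fin n) d (sampleEdges d ω), Real.logb p⁻¹ n < C.density}ᶜ := by
    intro n; ext; simp [Real.neg_logb_div_logb]
  simp_rw [hcompl, prob_compl_eq_one_sub MeasurableSet.of_discrete]
  have h := ((ENNReal.continuous_sub_left ENNReal.one_ne_top).tendsto 0).comp
    (tendsto_measure_exists_dense_cuph hd hp0 hp1)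
  rwa [tsub_zero] at h
end

section
/- Let d ≥ 2 be an integer, let H = (V,E) be a d-uniform hypergraph on n vertices, and let D > 0 be such that every complete multipartite subhypergraph (i.e., every (d,k)-cuph subhypergraph for every k) of H has density at most D. Then every fractional CM-cover of H has maximum vertex load at least |E|/(n·D). In particular, vc*_CM(H) ≥ ρ(H)/D where ρ(H) = |E|/n. -/
/-- **Density lower bound for fractional CM-covers.**  Let `d ≥ 2`, let `H` be a
`d`-uniform hypergraph on `n ≥ 1` vertices with edge set `E`, and let `D > 0` be
such that every complete multipartite (i.e. `(d,k)`-cuph, for any `k`)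
subhypergraph of `H` has density at most `D`.  Then every fractional CM-cover of
`H` has maximum vertex load at least `|E| / (n · D)`; in particular
`vc*_CM(H) ≥ ρ(H) / D` where `ρ(H) = |E| / n`. -/
theorem fractional_cover_load_lower_bound (d : ℕ) (hd : 2 ≤ d) (n : ℕ) (hn : 0 < n)
    (E : Finset (Finset (Fin n))) (hE : ∀ e ∈ E, e.card = d)
    (D : ℝ) (hD : 0 < D)
    (hdens : ∀ C : CuphSub (Fin n) d E, C.density ≤ D) :
    ∀ (M : ℕ) (f : Fin M → CuphSub (Fin n) d E) (w : Fin M → ℝ),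
      (∀ i, 0 ≤ w i) →
      (∀ e ∈ E,
        1 ≤ ∑ i ∈ Finset.univ.filter (fun i : Fin M => e ∈ (f i).edges), w i) →
      ∃ v : Fin n,
        (E.card : ℝ) / (n * D) ≤
          ∑ i ∈ Finset.univ.filter (fun i : Fin M => v ∈ (f i).verts), w i := by
  intro M f w hw hcov
  by_contra hcon
  push_neg at hcon
  have hedge : ∀ i : Fin M, ((f i).edges.card : ℝ) ≤ D * ((f i).verts.card : ℝ) := by
    intro i
    rcases Nat.eq_zero_or_pos (f i).verts.card with h0 | hpos
    · have hve : (f i).verts = ∅ := Finset.card_eq_zero.mp h0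
      have hee : (f i).edges = ∅ := by
        ext e
        simp only [CuphSub.edges, Finset.mem_filter, Finset.mem_univ, true_and,
          Finset.notMem_empty, iff_false]
        rintro ⟨hcard, hsub, -⟩
        have he : e = ∅ := Finset.subset_empty.mp (hve ▸ hsub)
        rw [he, Finset.card_empty] at hcard
        omega
      simp [hee, h0]
    · have h := hdens (f i)
      rw [CuphSub.density, div_le_iff₀ (by exact_mod_cast hpos)] at h
      linarith
  -- total load = ∑ i w i * |verts i|
  have h1 : ∑ v : Fin n, ∑ i ∈ Finset.univ.filter (fun i : Fin M => v ∈ (f i).verts), w i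
      = ∑ i : Fin M, ((f i).verts.card : ℝ) * w i := by
    simp only [Finset.sum_filter]
    rw [Finset.sum_comm]
    refine Finset.sum_congr rfl fun i _ => ?_
    rw [Finset.sum_ite_mem, Finset.univ_inter, Finset.sum_const, nsmul_eq_mul]
  -- |E| ≤ ∑ i w i * |edges i|
  have h2 : (E.card : ℝ) ≤ ∑ i : Fin M, ((f i).edges.card : ℝ) * w i := by
    have step1 : (E.card : ℝ) ≤
        ∑ e ∈ E, ∑ i ∈ Finset.univ.filter (fun i : Fin M => e ∈ (f i).edges), w i := by
      calc (E.card : ℝ) = ∑ _e ∈ E, 1 := by simp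
        _ ≤ _ := Finset.sum_le_sum fun e he => hcov e he
    have step2 : ∑ e ∈ E, ∑ i ∈ Finset.univ.filter (fun i : Fin M => e ∈ (f i).edges), w i
        = ∑ i : Fin M, ((E ∩ (f i).edges).card : ℝ) * w i := by
      simp only [Finset.sum_filter]
      rw [Finset.sum_comm]
      refine Finset.sum_congr rfl fun i _ => ?_
      rw [Finset.sum_ite_mem, Finset.sum_const, nsmul_eq_mul]
    have step3 : ∑ i : Fin M, ((E ∩ (f i).edges).card : ℝ) * w i
        ≤ ∑ i : Fin M, ((f i).edges.card : ℝ) * w i := by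
      refine Finset.sum_le_sum fun i _ => ?_
      have : (E ∩ (f i).edges).card ≤ (f i).edges.card :=
        Finset.card_le_card Finset.inter_subset_right
      exact mul_le_mul_of_nonneg_right (by exact_mod_cast this) (hw i)
    linarith
  have h3 : ∑ i : Fin M, ((f i).edges.card : ℝ) * w i
      ≤ D * ∑ i : Fin M, ((f i).verts.card : ℝ) * w i := by
    rw [Finset.mul_sum]
    refine Finset.sum_le_sum fun i _ => ?_
    rw [← mul_assoc]
    exact mul_le_mul_of_nonneg_right (hedge i) (hw i)
  have h4 : ∑ v : Fin n, ∑ i ∈ Finset.univ.filter (fun i : Fin M => v ∈ (f i).verts), w i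
      < ∑ _v : Fin n, (E.card : ℝ) / (n * D) := by
    refine Finset.sum_lt_sum_of_nonempty ?_ fun v _ => hcon v
    exact Finset.univ_nonempty_iff.mpr ⟨⟨0, hn⟩⟩
  rw [Finset.sum_const, nsmul_eq_mul, Finset.card_univ, Fintype.card_fin] at h4
  have hn' : (0:ℝ) < n := by exact_mod_cast hn
  have hfin : (n : ℝ) * ((E.card : ℝ) / (n * D)) = (E.card : ℝ) / D := by
    field_simp
  rw [hfin] at h4
  rw [h1] at h4
  have : (E.card : ℝ) < E.card := by
    calc (E.card : ℝ) ≤ ∑ i : Fin M, ((f i).edges.card : ℝ) * w i := h2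
      _ ≤ D * ∑ i : Fin M, ((f i).verts.card : ℝ) * w i := h3
      _ < D * ((E.card : ℝ) / D) := by exact mul_lt_mul_of_pos_left h4 hD
      _ = E.card := by field_simp
  linarith
end

section
/- Let G = (V,E) be a finite simple graph and let the vertex set be partitioned into classes H₁, …, H_t, each of size at most k. Orient each edge e arbitrarily, with head h(e) and tail t(e), and let N⁺(v) denote the set of heads of edges with tail v. For each class H_i and each nonempty S ⊆ H_i, let G_S be the complete bipartite graph with partite sets S and T_S = {v ∈ V : N⁺(v) ∩ H_i = S} (discarded if T_S is empty). Then every G_S is a complete bipartite subgraph of G, the edge sets of the graphs G_S partition E (each edge e lies in exactly the graph G_S with S = N⁺(t(e)) ∩ H_i where h(e) ∈ H_i), and every vertex v with v ∈ H_i is contained in at most 2^(|H_i|−1) of the sets S and in at most t of the sets T_S. -/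
/-! Each edge `e` is recorded in exactly one graph `G_S`: the one of the class `H i` containing
its head, with `S = N⁺(tail e) ∩ H i` and `tail e ∈ T_S`. Conversely, `a ∈ S` and `b ∈ T_S`
mean that `a ∈ N⁺(b)`, so `ba` is an edge oriented from `b` to `a`; this makes each `G_S` a
subgraph of `G` and pins down `S` from any of its edges. A vertex `v ∈ H i` lies only in sets
`S ⊆ H i`, which contain `v` and hence number at most `2^(|H i| - 1)`; and it lies in `T_S`
for at most one `S` per class, namely `S = N⁺(v) ∩ H j`. -/

/-- Given an orientation of the edges of `G` (recorded by `tail` and `head`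
functions on unordered pairs), `Nplus G tail head v` is the set `N⁺(v)` of heads
of edges with tail `v`. -/
def Nplus {V : Type*} [Fintype V] [DecidableEq V] (G : SimpleGraph V)
    [DecidableRel G.Adj] (tail head : Sym2 V → V) (v : V) : Finset V :=
  (G.edgeFinset.filter fun e => tail e = v).image head

/-- For a class `H i` of the vertex partition and a set `S ⊆ H i`, the second
partite set `T_S = {v : N⁺(v) ∩ H i = S}` of the complete bipartite graph `G_S`. -/
def Tset {V : Type*} [Fintype V] [DecidableEq V] (G : SimpleGraph V)
    [DecidableRel G.Adj] (tail head : Sym2 V → V) {t : ℕ} (H : Fin t → Finset V)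
    (i : Fin t) (S : Finset V) : Finset V :=
  Finset.univ.filter fun v => Nplus G tail head v ∩ H i = S

open Finset

theorem eq_of_mem_of_mem_of_pairwiseDisjoint {ι α : Type*} {H : ι → Finset α}
    (hdisj : ∀ i j : ι, i ≠ j → Disjoint (H i) (H j)) {i j : ι} {a : α} (hi : a ∈ H i)
    (hj : a ∈ H j) : i = j :=
  Pairwise.eq (r := fun i j => Disjoint (H i) (H j)) hdisj (not_disjoint_iff.2 ⟨a, hi, hj⟩)

section Orientation

variable {V : Type*} [Fintype V] [DecidableEq V] {G : SimpleGraph V} [DecidableRel G.Adj]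
  {tail head : Sym2 V → V}

theorem head_mem_Nplus_tail {e : Sym2 V} (he : e ∈ G.edgeSet) :
    head e ∈ Nplus G tail head (tail e) :=
  mem_image.2 ⟨e, mem_filter.2 ⟨G.mem_edgeFinset.2 he, rfl⟩, rfl⟩

theorem adj_and_orientation_of_mem_Nplus (horient : ∀ e ∈ G.edgeSet, e = s(tail e, head e))
    {v a : V} (ha : a ∈ Nplus G tail head v) :
    G.Adj v a ∧ tail s(v, a) = v ∧ head s(v, a) = a := by
  simp only [Nplus, mem_image, mem_filter, G.mem_edgeFinset] at ha
  obtain ⟨e, ⟨he, rfl⟩, rfl⟩ := ha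
  rw [← horient e he, ← G.mem_edgeSet, ← horient e he]
  exact ⟨he, rfl, rfl⟩

variable {t : ℕ} {H : Fin t → Finset V}

@[simp]
theorem mem_Tset {i : Fin t} {S : Finset V} {v : V} :
    v ∈ Tset G tail head H i S ↔ Nplus G tail head v ∩ H i = S := by
  simp [Tset]

theorem mem_Nplus_of_mem_Tset {i : Fin t} {S : Finset V} {a b : V} (ha : a ∈ S)
    (hb : b ∈ Tset G tail head H i S) : a ∈ Nplus G tail head b := by
  rw [mem_Tset] at hb
  subst hb
  exact (mem_inter.1 ha).1

theorem eq_of_mem_Tset {i : Fin t} {S S' : Finset V} {v : V}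
    (hS : v ∈ Tset G tail head H i S) (hS' : v ∈ Tset G tail head H i S') : S = S' :=
  (mem_Tset.1 hS).symm.trans (mem_Tset.1 hS')

theorem card_filter_mem_Tset_le (s : Finset (Σ _ : Fin t, Finset V)) (v : V) :
    #{x ∈ s | v ∈ Tset G tail head H x.1 x.2} ≤ t := by
  refine (card_le_card_of_injOn Sigma.fst (fun _ _ => mem_univ _) ?_).trans_eq (card_fin t)
  rintro ⟨i, S⟩ hx ⟨j, S'⟩ hy (rfl : i = j)
  rw [mem_coe, mem_filter] at hx hy
  obtain rfl := eq_of_mem_Tset hx.2 hy.2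
  rfl

theorem disjoint_Tset (horient : ∀ e ∈ G.edgeSet, e = s(tail e, head e)) (i : Fin t)
    (S : Finset V) : Disjoint S (Tset G tail head H i S) :=
  disjoint_left.2 fun _ ha ha' =>
    G.irrefl (adj_and_orientation_of_mem_Nplus horient (mem_Nplus_of_mem_Tset ha ha')).1

theorem tail_mem_Tset_Nplus_tail (i : Fin t) (e : Sym2 V) :
    tail e ∈ Tset G tail head H i (Nplus G tail head (tail e) ∩ H i) :=
  mem_Tset.2 rfl

theorem eq_Nplus_tail_inter_of_mem_Tset (horient : ∀ e ∈ G.edgeSet, e = s(tail e, head e))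
    (hdisj : ∀ i j : Fin t, i ≠ j → Disjoint (H i) (H j)) {i j : Fin t} {S : Finset V}
    {a b : V} (ha : a ∈ S) (hS : S ⊆ H j) (hb : b ∈ Tset G tail head H j S)
    (hi : head s(a, b) ∈ H i) :
    j = i ∧ S = Nplus G tail head (tail s(a, b)) ∩ H i := by
  obtain ⟨-, htail, hhead⟩ :=
    adj_and_orientation_of_mem_Nplus horient (mem_Nplus_of_mem_Tset ha hb)
  rw [Sym2.eq_swap, htail]
  rw [Sym2.eq_swap, hhead] at hi
  obtain rfl : j = i := eq_of_mem_of_mem_of_pairwiseDisjoint hdisj (hS ha) hi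
  exact ⟨rfl, (mem_Tset.1 hb).symm⟩

end Orientation

theorem card_filter_mem_le_of_pairwiseDisjoint {ι α : Type*} [DecidableEq ι] [DecidableEq α]
    {H : ι → Finset α} (hdisj : ∀ i j : ι, i ≠ j → Disjoint (H i) (H j))
    {s : Finset (Σ _ : ι, Finset α)} (hs : ∀ x ∈ s, x.2 ⊆ H x.1) {i : ι} {v : α} (hv : v ∈ H i) :
    #{x ∈ s | v ∈ x.2} ≤ 2 ^ (#(H i) - 1) := by
  calc #{x ∈ s | v ∈ x.2}
      ≤ #(((H i).erase v).powerset.image fun S => (⟨i, insert v S⟩ : Σ _ : ι, Finset α)) := by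
        refine card_le_card fun ⟨j, S⟩ hx => ?_
        obtain ⟨hx, hvS⟩ := mem_filter.1 hx
        have hSj : S ⊆ H j := hs _ hx
        obtain rfl : j = i := eq_of_mem_of_mem_of_pairwiseDisjoint hdisj (hSj hvS) hv
        refine mem_image.2 ⟨S.erase v, mem_powerset.2 (erase_subset_erase v hSj), ?_⟩
        rw [insert_erase hvS]
    _ ≤ #((H i).erase v).powerset := card_image_le
    _ = 2 ^ (#(H i) - 1) := by rw [card_powerset, card_erase_of_mem hv]

theorem bipartite_decomposition_general {V : Type*} [Fintype V] [DecidableEq V]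
    (G : SimpleGraph V) [DecidableRel G.Adj]
    (t : ℕ) (H : Fin t → Finset V)
    (hdisj : ∀ i j : Fin t, i ≠ j → Disjoint (H i) (H j))
    (tail head : Sym2 V → V)
    (horient : ∀ e ∈ G.edgeSet, e = s(tail e, head e)) :
    -- (1) each `G_S` is a complete bipartite subgraph of `G`
    (∀ (i : Fin t) (S : Finset V), S.Nonempty → S ⊆ H i →
      (Tset G tail head H i S).Nonempty →
      Disjoint S (Tset G tail head H i S) ∧
        ∀ a ∈ S, ∀ b ∈ Tset G tail head H i S, G.Adj a b) ∧
    -- (2) the edge sets of the `G_S` partition the edge set of `G`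
    (∀ e ∈ G.edgeSet, ∀ i : Fin t, head e ∈ H i →
      (∃ a ∈ Nplus G tail head (tail e) ∩ H i,
        ∃ b ∈ Tset G tail head H i (Nplus G tail head (tail e) ∩ H i),
          e = s(a, b)) ∧
      (∀ (j : Fin t) (S : Finset V), S.Nonempty → S ⊆ H j →
        (∃ a ∈ S, ∃ b ∈ Tset G tail head H j S, e = s(a, b)) →
        j = i ∧ S = Nplus G tail head (tail e) ∩ H i)) ∧
    -- (3) the load bounds
    (∀ (i : Fin t) (v : V), v ∈ H i →
      (((Finset.univ.sigma fun j : Fin t =>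
          (H j).powerset.filter fun S => S.Nonempty).filter
            fun x => v ∈ x.2).card ≤ 2 ^ ((H i).card - 1)) ∧
      (((Finset.univ.sigma fun j : Fin t =>
          (H j).powerset.filter fun S => S.Nonempty).filter
            fun x => v ∈ Tset G tail head H x.1 x.2).card ≤ t)) := by
  refine ⟨fun i S _ _ _ => ⟨disjoint_Tset horient i S, fun a ha b hb => ?_⟩,
    fun e he i hi => ⟨?_, ?_⟩, fun i v hv => ⟨?_, card_filter_mem_Tset_le _ v⟩⟩
  · exact (adj_and_orientation_of_mem_Nplus horient (mem_Nplus_of_mem_Tset ha hb)).1.symm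
  · refine ⟨head e, mem_inter.2 ⟨head_mem_Nplus_tail he, hi⟩, tail e,
      tail_mem_Tset_Nplus_tail i e, ?_⟩
    rw [Sym2.eq_swap]
    exact horient e he
  · rintro j S - hS ⟨a, ha, b, hb, rfl⟩
    exact eq_Nplus_tail_inter_of_mem_Tset horient hdisj ha hS hb hi
  · refine card_filter_mem_le_of_pairwiseDisjoint hdisj (fun x hx => ?_) hv
    exact mem_powerset.1 (mem_filter.1 (mem_sigma.1 hx).2).1

/-- **The basic bipartite decomposition.**  Let `G` be a finite simple graph whose
vertex set is partitioned into classes `H 0, …, H (t-1)`, each of size at most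
`k`, and orient each edge `e` arbitrarily with tail `tail e` and head `head e`.
For each class `H i` and each nonempty `S ⊆ H i`, let `G_S` be the complete
bipartite graph with partite sets `S` and `T_S = {v : N⁺(v) ∩ H i = S}`.  Then:
(1) every `G_S` (with `T_S` nonempty) is a complete bipartite subgraph of `G`
(its partite sets are disjoint and all cross pairs are edges of `G`);
(2) the edge sets of the graphs `G_S` partition the edge set of `G` — each edge
`e` lies exactly in the graph `G_S` with `S = N⁺(tail e) ∩ H i`, where `H i` is
the class containing `head e`;
(3) every vertex `v ∈ H i` is contained in at most `2^(|H i| - 1)` of the sets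
`S` and in at most `t` of the sets `T_S`. -/
theorem bipartite_decomposition {V : Type*} [Fintype V] [DecidableEq V]
    (G : SimpleGraph V) [DecidableRel G.Adj]
    (t k : ℕ) (H : Fin t → Finset V)
    (hdisj : ∀ i j : Fin t, i ≠ j → Disjoint (H i) (H j))
    (hcover : ∀ v : V, ∃ i, v ∈ H i)
    (hsize : ∀ i, (H i).card ≤ k)
    (tail head : Sym2 V → V)
    (horient : ∀ e ∈ G.edgeSet, e = s(tail e, head e)) :
    -- (1) each `G_S` is a complete bipartite subgraph of `G`
    (∀ (i : Fin t) (S : Finset V), S.Nonempty → S ⊆ H i →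
      (Tset G tail head H i S).Nonempty →
      Disjoint S (Tset G tail head H i S) ∧
        ∀ a ∈ S, ∀ b ∈ Tset G tail head H i S, G.Adj a b) ∧
    -- (2) the edge sets of the `G_S` partition the edge set of `G`
    (∀ e ∈ G.edgeSet, ∀ i : Fin t, head e ∈ H i →
      (∃ a ∈ Nplus G tail head (tail e) ∩ H i,
        ∃ b ∈ Tset G tail head H i (Nplus G tail head (tail e) ∩ H i),
          e = s(a, b)) ∧
      (∀ (j : Fin t) (S : Finset V), S.Nonempty → S ⊆ H j →
        (∃ a ∈ S, ∃ b ∈ Tset G tail head H j S, e = s(a, b)) →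
        j = i ∧ S = Nplus G tail head (tail e) ∩ H i)) ∧
    -- (3) the load bounds
    (∀ (i : Fin t) (v : V), v ∈ H i →
      (((Finset.univ.sigma fun j : Fin t =>
          (H j).powerset.filter fun S => S.Nonempty).filter
            fun x => v ∈ x.2).card ≤ 2 ^ ((H i).card - 1)) ∧
      (((Finset.univ.sigma fun j : Fin t =>
          (H j).powerset.filter fun S => S.Nonempty).filter
            fun x => v ∈ Tset G tail head H x.1 x.2).card ≤ t)) :=
  bipartite_decomposition_general G t H hdisj tail head horient
end
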